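/- arXiv:0909.3491 — 11 statements merged into one kernel-verified Lean document; each statement's English description precedes it below -/
import Mathlib

section
/- Let X be a Banach space, Y a subspace, C a collection of bounded operators on X, and G a finite-dimensional subspace of minimal dimension with TY ⊆ Y + G for all T ∈ C. If P : Y ⊕ G → G is the projection along Y, then the linear span of the union over T ∈ C of PT(Y) equals G. -/
/-!
Let `S` be the span of the sets `P T(Y)`. Since `P` kills `Y` and fixes `G`, every
`x ∈ Y ⊔ G` splits as `x = y + P x` with `y ∈ Y` and `P x ∈ G`. Applied to
`x = T y` this gives `S ≤ G` and `T(Y) ≤ Y ⊔ S` for every `T ∈ C`, so `S` is itself an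
admissible subspace; minimality of `G` forces `dim G ≤ dim S`, hence `S = G`.
-/

namespace Submodule

variable {R M : Type*} [Semiring R] [AddCommMonoid M] [Module R M]
  {Y G : Submodule R M} {P : M →ₗ[R] M}

theorem exists_eq_add_apply_of_mem_sup (hPY : ∀ y ∈ Y, P y = 0) (hPG : ∀ g ∈ G, P g = g)
    {x : M} (hx : x ∈ Y ⊔ G) : ∃ y ∈ Y, x = y + P x ∧ P x ∈ G := by
  obtain ⟨y, hy, g, hg, rfl⟩ := mem_sup.mp hx
  rw [map_add, hPY y hy, hPG g hg, zero_add]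
  exact ⟨y, hy, rfl, hg⟩

theorem map_map_le_of_map_le_sup (hPY : ∀ y ∈ Y, P y = 0) (hPG : ∀ g ∈ G, P g = g)
    {T : M →ₗ[R] M} (hT : Y.map T ≤ Y ⊔ G) : (Y.map T).map P ≤ G := by
  rintro _ ⟨x, hx, rfl⟩
  obtain ⟨-, -, -, hPx⟩ := exists_eq_add_apply_of_mem_sup hPY hPG (hT hx)
  exact hPx

theorem map_le_sup_map_map (hPY : ∀ y ∈ Y, P y = 0) (hPG : ∀ g ∈ G, P g = g)
    {T : M →ₗ[R] M} (hT : Y.map T ≤ Y ⊔ G) : Y.map T ≤ Y ⊔ (Y.map T).map P := by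
  intro x hx
  obtain ⟨y, hy, hxy, -⟩ := exists_eq_add_apply_of_mem_sup hPY hPG (hT hx)
  rw [hxy]
  exact add_mem_sup hy (mem_map_of_mem hx)

end Submodule

open Submodule in
theorem span_union_proj_images_eq_min_error_general
    {X : Type*} [NormedAddCommGroup X] [NormedSpace ℂ X]
    (Y : Submodule ℂ X)
    (C : Set (X →L[ℂ] X)) (G : Submodule ℂ X) [FiniteDimensional ℂ G]
    (hG : ∀ T ∈ C, Y.map (T : X →ₗ[ℂ] X) ≤ Y ⊔ G)
    (hmin : ∀ F : Submodule ℂ X, FiniteDimensional ℂ F →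
      (∀ T ∈ C, Y.map (T : X →ₗ[ℂ] X) ≤ Y ⊔ F) → Module.finrank ℂ G ≤ Module.finrank ℂ F)
    (P : X →ₗ[ℂ] X) (hPY : ∀ y ∈ Y, P y = 0) (hPG : ∀ g ∈ G, P g = g) :
    Submodule.span ℂ (⋃ T ∈ C, P '' (T '' (Y : Set X))) = G := by
  set S := ⨆ T ∈ C, (Y.map (T : X →ₗ[ℂ] X)).map P
  have hS : span ℂ (⋃ T ∈ C, P '' (T '' (Y : Set X))) = S := by
    rw [span_iUnion₂]
    refine iSup_congr fun T ↦ iSup_congr fun _ ↦ ?_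
    rw [← ContinuousLinearMap.coe_coe T, ← map_coe, ← map_coe, span_eq]
  have hSG : S ≤ G := iSup₂_le fun T hT ↦ map_map_le_of_map_le_sup hPY hPG (hG T hT)
  have hSfin : FiniteDimensional ℂ S := finiteDimensional_of_le hSG
  rw [hS]
  refine eq_of_le_of_finrank_le hSG (hmin S hSfin fun T hT ↦ ?_)
  have hTS : (Y.map (T : X →ₗ[ℂ] X)).map P ≤ S :=
    le_iSup₂ (f := fun T (_ : T ∈ C) ↦ (Y.map (T : X →ₗ[ℂ] X)).map P) T hT
  exact (map_le_sup_map_map hPY hPG (hG T hT)).trans (sup_le_sup_left hTS Y)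

theorem span_union_proj_images_eq_min_error
    {X : Type*} [NormedAddCommGroup X] [NormedSpace ℂ X] [CompleteSpace X]
    (Y : Submodule ℂ X) (hYc : IsClosed (Y : Set X))
    (C : Set (X →L[ℂ] X)) (G : Submodule ℂ X) [FiniteDimensional ℂ G]
    (hG : ∀ T ∈ C, Y.map (T : X →ₗ[ℂ] X) ≤ Y ⊔ G)
    (hmin : ∀ F : Submodule ℂ X, FiniteDimensional ℂ F →
      (∀ T ∈ C, Y.map (T : X →ₗ[ℂ] X) ≤ Y ⊔ F) → Module.finrank ℂ G ≤ Module.finrank ℂ F)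
    (P : X →ₗ[ℂ] X) (hPY : ∀ y ∈ Y, P y = 0) (hPG : ∀ g ∈ G, P g = g) :
    Submodule.span ℂ (⋃ T ∈ C, P '' (T '' (Y : Set X))) = G :=
  span_union_proj_images_eq_min_error_general Y C G hG hmin P hPY hPG
end

section
/- Let X be a Banach space, T a bounded operator on X, Y a subspace with TY ⊆ Y + G where G is finite-dimensional of minimal dimension. If P : Y ⊕ G → G is the projection along Y, then PT(Y) = G. Moreover, G can be chosen so that G ⊆ TY. -/
/-!
Write `W = T(Y)`. Every `x ∈ Y ⊔ G` satisfies `x - P x ∈ Y`, so for any `V ≤ Y ⊔ G` the spaces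
`Y ⊔ V` and `Y ⊔ P(V)` coincide. With `V = W` this shows that `P(W) ⊆ G` is itself an admissible
choice of `G`, hence equals `G` by minimality. Lifting a basis of `P(W) = G` to `W` gives a subspace
`G' ⊆ W` with `P(G') = G` and `dim G' ≤ dim G`; then `Y ⊔ G' = Y ⊔ P(G') = Y ⊔ G ⊇ W`.
-/

namespace Submodule

section Projection

variable {R M : Type*} [Ring R] [AddCommGroup M] [Module R M]
  {Y G V : Submodule R M} {P : M →ₗ[R] M}

theorem sub_apply_mem_of_mem_sup (hPY : ∀ y ∈ Y, P y = 0) (hPG : ∀ g ∈ G, P g = g)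
    {x : M} (hx : x ∈ Y ⊔ G) : x - P x ∈ Y := by
  obtain ⟨y, hy, g, hg, rfl⟩ := mem_sup.mp hx
  rwa [map_add, hPY y hy, hPG g hg, zero_add, add_sub_cancel_right]

theorem map_le_of_le_sup (hPY : ∀ y ∈ Y, P y = 0) (hPG : ∀ g ∈ G, P g = g)
    (hV : V ≤ Y ⊔ G) : V.map P ≤ G := by
  rintro _ ⟨x, hx, rfl⟩
  obtain ⟨y, hy, g, hg, rfl⟩ := mem_sup.mp (hV hx)
  rwa [map_add, hPY y hy, hPG g hg, zero_add]

theorem sup_map_eq_sup_of_le_sup (hPY : ∀ y ∈ Y, P y = 0) (hPG : ∀ g ∈ G, P g = g)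
    (hV : V ≤ Y ⊔ G) : Y ⊔ V.map P = Y ⊔ V := by
  have hYpart {x : M} (hx : x ∈ V) : x - P x ∈ Y := sub_apply_mem_of_mem_sup hPY hPG (hV hx)
  apply le_antisymm <;> refine sup_le le_sup_left ?_
  · rintro _ ⟨x, hx, rfl⟩
    have h := sub_mem_sup hx (hYpart hx)
    rwa [sub_sub_cancel, sup_comm] at h
  · intro x hx
    have h := add_mem_sup (hYpart hx) (mem_map_of_mem (f := P) hx)
    rwa [sub_add_cancel] at h

end Projection

theorem exists_le_map_eq_finrank_le {K M N : Type*} [DivisionRing K] [AddCommGroup M]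
    [Module K M] [AddCommGroup N] [Module K N] (f : M →ₗ[K] N) (W : Submodule K M)
    [FiniteDimensional K (W.map f)] :
    ∃ W' ≤ W, FiniteDimensional K W' ∧ W'.map f = W.map f ∧
      Module.finrank K W' ≤ Module.finrank K (W.map f) := by
  let b := Module.finBasis K (W.map f)
  have hlift (i) : ∃ t ∈ W, f t = b i := mem_map.mp (b i).2
  choose t ht hft using hlift
  refine ⟨span K (Set.range t), span_le.mpr (Set.range_subset_iff.mpr ht),
    FiniteDimensional.span_of_finite K (Set.finite_range t), ?_, ?_⟩
  · rw [map_span, ← Set.range_comp, show f ∘ t = (W.map f).subtype ∘ b from funext hft,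
      Set.range_comp, ← map_span, b.span_eq, map_subtype_top]
  · simpa [Set.finrank] using finrank_range_le_card (R := K) t

end Submodule

open Submodule in
theorem proj_image_eq_min_error_single_operator_general
    {X : Type*} [NormedAddCommGroup X] [NormedSpace ℂ X]
    (Y : Submodule ℂ X)
    (T : X →L[ℂ] X) (G : Submodule ℂ X) [FiniteDimensional ℂ G]
    (hG : Y.map (T : X →ₗ[ℂ] X) ≤ Y ⊔ G)
    (hmin : ∀ F : Submodule ℂ X, FiniteDimensional ℂ F →
      Y.map (T : X →ₗ[ℂ] X) ≤ Y ⊔ F → Module.finrank ℂ G ≤ Module.finrank ℂ F)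
    (P : X →ₗ[ℂ] X) (hPY : ∀ y ∈ Y, P y = 0) (hPG : ∀ g ∈ G, P g = g) :
    (Y.map (T : X →ₗ[ℂ] X)).map P = G ∧
      ∃ G' : Submodule ℂ X, FiniteDimensional ℂ G' ∧
        Module.finrank ℂ G' = Module.finrank ℂ G ∧
        G' ≤ Y.map (T : X →ₗ[ℂ] X) ∧ Y.map (T : X →ₗ[ℂ] X) ≤ Y ⊔ G' := by
  set W := Y.map (T : X →ₗ[ℂ] X)
  have hWP : W.map P ≤ G := map_le_of_le_sup hPY hPG hG
  have : FiniteDimensional ℂ (W.map P) := finiteDimensional_of_le hWP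
  have hW_le : W ≤ Y ⊔ W.map P := by
    rw [sup_map_eq_sup_of_le_sup hPY hPG hG]
    exact le_sup_right
  have hWP_eq : W.map P = G := eq_of_le_of_finrank_le hWP (hmin _ this hW_le)
  obtain ⟨G', hG'W, hG'fd, hG'P, hG'rank⟩ := exists_le_map_eq_finrank_le P W
  have hW_le' : W ≤ Y ⊔ G' := by
    rwa [← hG'P, sup_map_eq_sup_of_le_sup hPY hPG (hG'W.trans hG)] at hW_le
  refine ⟨hWP_eq, G', hG'fd, le_antisymm ?_ (hmin G' hG'fd hW_le'), hG'W, hW_le'⟩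
  rwa [← hWP_eq]

theorem proj_image_eq_min_error_single_operator
    {X : Type*} [NormedAddCommGroup X] [NormedSpace ℂ X] [CompleteSpace X]
    (Y : Submodule ℂ X) (hYc : IsClosed (Y : Set X))
    (T : X →L[ℂ] X) (G : Submodule ℂ X) [FiniteDimensional ℂ G]
    (hG : Y.map (T : X →ₗ[ℂ] X) ≤ Y ⊔ G)
    (hmin : ∀ F : Submodule ℂ X, FiniteDimensional ℂ F →
      Y.map (T : X →ₗ[ℂ] X) ≤ Y ⊔ F → Module.finrank ℂ G ≤ Module.finrank ℂ F)
    (P : X →ₗ[ℂ] X) (hPY : ∀ y ∈ Y, P y = 0) (hPG : ∀ g ∈ G, P g = g) :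
    (Y.map (T : X →ₗ[ℂ] X)).map P = G ∧
      ∃ G' : Submodule ℂ X, FiniteDimensional ℂ G' ∧
        Module.finrank ℂ G' = Module.finrank ℂ G ∧
        G' ≤ Y.map (T : X →ₗ[ℂ] X) ∧ Y.map (T : X →ₗ[ℂ] X) ≤ Y ⊔ G' :=
  proj_image_eq_min_error_single_operator_general Y T G hG hmin P hPY hPG
end

section
/- There exist two bounded operators T and S on ℓ²(ℤ) with T² = S² = TS = ST = 0 and a subspace Y such that, with G the minimal finite-dimensional subspace satisfying RY ⊆ Y + G for all R in the algebra generated by T and S, and P the projection of Y ⊕ G onto G along Y, the set ∪_{R ∈ A} PR(Y) is not a linear subspace. -/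
/-!
Take `T = E₁₀ + E₂,₋₁` and `S = E₃₀` (matrix units on `ℓ²(ℤ)`), `Y = {x | x₁ = x₂ = x₃ = 0}` and
`G = span {e₁, e₂, e₃}`. Every `aT + bS` maps into `G`, on which `P` is the identity, so the union
is `{a y₀ e₁ + a y₋₁ e₂ + b y₀ e₃}`. It contains `e₂ = T e₋₁` and `e₃ = S e₀`, but not `e₂ + e₃`,
which would need `a y₀ = 0` while `a y₋₁ = b y₀ = 1`. For minimality: any admissible `F` has
`e₁, e₂, e₃ ∈ Y + F`, and `G ∩ Y = 0`, so `G` embeds into `(Y + F) / Y`, a quotient of `F`.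
-/

open Module
open scoped ENNReal

theorem Submodule.finrank_le_of_le_sup_of_disjoint {K E : Type*} [DivisionRing K]
    [AddCommGroup E] [Module K E] {Y G F : Submodule K E} [FiniteDimensional K F]
    (hGY : Disjoint G Y) (hG : G ≤ Y ⊔ F) : finrank K G ≤ finrank K F := by
  have hinj : Function.Injective (Y.mkQ.domRestrict G) :=
    LinearMap.injective_domRestrict_iff.mpr (by rwa [Submodule.ker_mkQ])
  have hmap : G.map Y.mkQ ≤ F.map Y.mkQ := by
    simpa only [Submodule.map_sup, Submodule.mkQ_map_self, bot_sup_eq] using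
      Submodule.map_mono (f := Y.mkQ) hG
  calc finrank K G = finrank K (G.map Y.mkQ) := by
        rw [← LinearMap.range_domRestrict, LinearMap.finrank_range_of_inj hinj]
    _ ≤ finrank K (F.map Y.mkQ) := Submodule.finrank_mono hmap
    _ ≤ finrank K F := Submodule.finrank_map_le _ _

namespace lp

variable {ι 𝕜 : Type*} [NormedField 𝕜] {p : ℝ≥0∞}

variable (𝕜 p) in
def vanishingOn (s : Set ι) : Submodule 𝕜 (lp (fun _ : ι => 𝕜) p) where
  carrier := {x | ∀ i ∈ s, x i = 0}
  add_mem' hx hy i hi := by simp [hx i hi, hy i hi]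
  zero_mem' _ _ := rfl
  smul_mem' c x hx i hi := by simp [hx i hi]

lemma isClosed_vanishingOn [Fact (1 ≤ p)] (s : Set ι) :
    IsClosed (vanishingOn 𝕜 p s : Set (lp (fun _ : ι => 𝕜) p)) := by
  simp only [vanishingOn, Submodule.coe_set_mk, AddSubmonoid.coe_set_mk,
    AddSubsemigroup.coe_set_mk, Set.ofPred_forall]
  exact isClosed_biInter fun i _ =>
    isClosed_eq (evalCLM 𝕜 (fun _ => 𝕜) p i).continuous continuous_const

lemma vanishingOn_inf_vanishingOn_compl (s : Set ι) :
    vanishingOn 𝕜 p s ⊓ vanishingOn 𝕜 p sᶜ = ⊥ := by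
  refine eq_bot_iff.mpr fun x ⟨hs, hsc⟩ => (Submodule.mem_bot 𝕜).mpr (lp.ext (funext fun i => ?_))
  by_cases hi : i ∈ s
  · exact hs i hi
  · exact hsc i hi

variable [DecidableEq ι]

lemma single_mem_vanishingOn {s : Set ι} {i : ι} (hi : i ∉ s) (c : 𝕜) :
    lp.single p i c ∈ vanishingOn 𝕜 p s :=
  fun _ hj => lp.single_apply_ne (E := fun _ : ι => 𝕜) p i c (ne_of_mem_of_not_mem hj hi)

variable (𝕜 p) in
noncomputable def spanSingle (s : Set ι) : Submodule 𝕜 (lp (fun _ : ι => 𝕜) p) :=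
  Submodule.span 𝕜 ((fun i => lp.single p i (1 : 𝕜)) '' s)

lemma single_mem_spanSingle {s : Set ι} {i : ι} (hi : i ∈ s) :
    lp.single p i (1 : 𝕜) ∈ spanSingle 𝕜 p s :=
  Submodule.subset_span ⟨i, hi, rfl⟩

lemma spanSingle_le_vanishingOn_compl (s : Set ι) :
    spanSingle 𝕜 p s ≤ vanishingOn 𝕜 p sᶜ :=
  Submodule.span_le.mpr <| by
    rintro _ ⟨i, hi, rfl⟩
    exact single_mem_vanishingOn (Set.notMem_compl_iff.mpr hi) 1

lemma disjoint_spanSingle_vanishingOn (s : Set ι) :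
    Disjoint (spanSingle 𝕜 p s) (vanishingOn 𝕜 p s) := by
  rw [disjoint_iff, inf_comm, ← le_bot_iff, ← vanishingOn_inf_vanishingOn_compl s]
  exact inf_le_inf_left _ (spanSingle_le_vanishingOn_compl s)

instance (s : Set ι) [Finite s] : FiniteDimensional 𝕜 (spanSingle 𝕜 p s) :=
  FiniteDimensional.span_of_finite 𝕜 (Set.toFinite _)

variable [Fact (1 ≤ p)]

variable (𝕜 p) in
noncomputable def matrixUnit (j i : ι) : lp (fun _ : ι => 𝕜) p →L[𝕜] lp (fun _ : ι => 𝕜) p :=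
  (evalCLM 𝕜 (fun _ => 𝕜) p i).smulRight (lp.single p j 1)

@[simp] lemma matrixUnit_apply (j i : ι) (x : lp (fun _ : ι => 𝕜) p) :
    matrixUnit 𝕜 p j i x = x i • lp.single p j 1 := rfl

lemma matrixUnit_mul_matrixUnit_of_ne {j i k l : ι} (h : i ≠ k) :
    matrixUnit 𝕜 p j i * matrixUnit 𝕜 p k l = 0 := by
  ext1 x
  simp [Pi.single_eq_of_ne h]

lemma matrixUnit_apply_mem_spanSingle {s : Set ι} {j : ι} (hj : j ∈ s) (i : ι)
    (x : lp (fun _ : ι => 𝕜) p) : matrixUnit 𝕜 p j i x ∈ spanSingle 𝕜 p s :=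
  Submodule.smul_mem _ _ (single_mem_spanSingle hj)

end lp

namespace NilpotentPairExample

local notation "ℓ²" => lp (fun _ : ℤ => ℂ) 2

noncomputable def T : ℓ² →L[ℂ] ℓ² := lp.matrixUnit ℂ 2 1 0 + lp.matrixUnit ℂ 2 2 (-1)

noncomputable def S : ℓ² →L[ℂ] ℓ² := lp.matrixUnit ℂ 2 3 0

noncomputable abbrev Y : Submodule ℂ ℓ² := lp.vanishingOn ℂ 2 {1, 2, 3}

noncomputable abbrev G : Submodule ℂ ℓ² := lp.spanSingle ℂ 2 {1, 2, 3}

lemma T_mul_T : T * T = 0 := by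
  simp [T, mul_add, add_mul, lp.matrixUnit_mul_matrixUnit_of_ne]

lemma S_mul_S : S * S = 0 := lp.matrixUnit_mul_matrixUnit_of_ne (by decide)

lemma T_mul_S : T * S = 0 := by
  simp [T, S, add_mul, lp.matrixUnit_mul_matrixUnit_of_ne]

lemma S_mul_T : S * T = 0 := by
  simp [T, S, mul_add, lp.matrixUnit_mul_matrixUnit_of_ne]

lemma combination_apply_mem_G (a b : ℂ) (x : ℓ²) : (a • T + b • S) x ∈ G := by
  have mem (j : ℤ) (hj : j ∈ ({1, 2, 3} : Set ℤ)) (i : ℤ) :=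
    lp.matrixUnit_apply_mem_spanSingle (𝕜 := ℂ) (p := 2) hj i x
  simp only [T, S, add_apply, smul_apply]
  exact add_mem (Submodule.smul_mem _ _ (add_mem (mem 1 (by simp) 0) (mem 2 (by simp) (-1))))
    (Submodule.smul_mem _ _ (mem 3 (by simp) 0))

lemma exists_combination_apply_eq_single :
    ∀ i ∈ ({1, 2, 3} : Set ℤ), ∃ a b : ℂ, ∃ y ∈ Y, (a • T + b • S) y = lp.single 2 i 1 := by
  have h0 : lp.single 2 (0 : ℤ) (1 : ℂ) ∈ Y := lp.single_mem_vanishingOn (by simp) 1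
  have h1 : lp.single 2 (-1 : ℤ) (1 : ℂ) ∈ Y := lp.single_mem_vanishingOn (by simp) 1
  rintro i (rfl | rfl | rfl)
  · exact ⟨1, 0, _, h0, by simp [T]⟩
  · exact ⟨1, 0, _, h1, by simp [T]⟩
  · exact ⟨0, 1, _, h0, by simp [S]⟩

lemma combination_apply_ne_single_add_single (a b : ℂ) (y : ℓ²) :
    (a • T + b • S) y ≠ lp.single 2 2 1 + lp.single 2 3 1 := by
  intro h
  have h1 := congrArg (fun z : ℓ² => z 1) h
  have h2 := congrArg (fun z : ℓ² => z 2) h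
  have h3 := congrArg (fun z : ℓ² => z 3) h
  simp only [T, S, lp.coeFn_add, lp.coeFn_smul, add_apply, smul_apply, lp.matrixUnit_apply,
    lp.coeFn_single, Pi.add_apply, Pi.smul_apply, Pi.single_apply, smul_eq_mul] at h1 h2 h3
  norm_num at h1 h2 h3
  rcases h1 with rfl | hy0
  · simp at h2
  · simp [hy0] at h3

lemma union_image_ne_submodule (P : ℓ² →ₗ[ℂ] ℓ²) (hPG : ∀ g ∈ G, P g = g) (W : Submodule ℂ ℓ²) :
    (W : Set ℓ²) ≠ ⋃ (a : ℂ), ⋃ (b : ℂ), P '' ((a • T + b • S) '' (Y : Set ℓ²)) := by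
  intro hW
  have mem_single : ∀ i ∈ ({1, 2, 3} : Set ℤ), lp.single 2 i (1 : ℂ) ∈ W := by
    intro i hi
    obtain ⟨a, b, y, hy, hyi⟩ := exists_combination_apply_eq_single i hi
    rw [← SetLike.mem_coe, hW, ← hyi, ← hPG _ (combination_apply_mem_G a b y)]
    exact Set.mem_iUnion₂_of_mem (i := a) (j := b) ⟨_, ⟨y, hy, rfl⟩, rfl⟩
  have hsum := W.add_mem (mem_single 2 (by simp)) (mem_single 3 (by simp))
  rw [← SetLike.mem_coe, hW] at hsum
  simp only [Set.mem_iUnion, Set.mem_image] at hsum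
  obtain ⟨a, b, _, ⟨y, -, rfl⟩, hPy⟩ := hsum
  rw [hPG _ (combination_apply_mem_G a b y)] at hPy
  exact combination_apply_ne_single_add_single a b y hPy

end NilpotentPairExample

open NilpotentPairExample in
theorem exists_algebra_proj_union_not_linear :
    ∃ (T S : lp (fun _ : ℤ => ℂ) 2 →L[ℂ] lp (fun _ : ℤ => ℂ) 2),
      T * T = 0 ∧ S * S = 0 ∧ T * S = 0 ∧ S * T = 0 ∧
      ∃ (Y G : Submodule ℂ (lp (fun _ : ℤ => ℂ) 2)),
        IsClosed (Y : Set (lp (fun _ : ℤ => ℂ) 2)) ∧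
        FiniteDimensional ℂ G ∧
        (∀ a b : ℂ, Y.map ((a • T + b • S : lp (fun _ : ℤ => ℂ) 2 →L[ℂ] lp (fun _ : ℤ => ℂ) 2) : lp (fun _ : ℤ => ℂ) 2 →ₗ[ℂ] lp (fun _ : ℤ => ℂ) 2) ≤ Y ⊔ G) ∧
        (∀ F : Submodule ℂ (lp (fun _ : ℤ => ℂ) 2), FiniteDimensional ℂ F →
          (∀ a b : ℂ, Y.map ((a • T + b • S : lp (fun _ : ℤ => ℂ) 2 →L[ℂ] lp (fun _ : ℤ => ℂ) 2) : lp (fun _ : ℤ => ℂ) 2 →ₗ[ℂ] lp (fun _ : ℤ => ℂ) 2) ≤ Y ⊔ F) →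
          Module.finrank ℂ G ≤ Module.finrank ℂ F) ∧
        ∀ P : lp (fun _ : ℤ => ℂ) 2 →ₗ[ℂ] lp (fun _ : ℤ => ℂ) 2,
          (∀ y ∈ Y, P y = 0) → (∀ g ∈ G, P g = g) →
          ¬ ∃ W : Submodule ℂ (lp (fun _ : ℤ => ℂ) 2),
            (W : Set (lp (fun _ : ℤ => ℂ) 2)) =
              ⋃ (a : ℂ), ⋃ (b : ℂ), P '' ((a • T + b • S) '' (Y : Set (lp (fun _ : ℤ => ℂ) 2))) := by
  refine ⟨T, S, T_mul_T, S_mul_S, T_mul_S, S_mul_T, Y, G, lp.isClosed_vanishingOn _,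
    inferInstance, ?_, ?_, fun P _ hPG ⟨W, hW⟩ => union_image_ne_submodule P hPG W hW⟩
  · rintro a b _ ⟨y, -, rfl⟩
    exact Submodule.mem_sup_right (combination_apply_mem_G a b y)
  · intro F _ hF
    refine Submodule.finrank_le_of_le_sup_of_disjoint (lp.disjoint_spanSingle_vanishingOn _)
      (Submodule.span_le.mpr ?_)
    rintro _ ⟨i, hi, rfl⟩
    obtain ⟨a, b, y, hy, hyi⟩ := exists_combination_apply_eq_single i hi
    exact hF a b ⟨y, hy, hyi⟩
end

section
/- Let Y be a half-space in a Banach space X and A an algebra of bounded operators on X. If there exists a single finite-dimensional subspace F such that TY ⊆ Y + F for every T ∈ A, then A has an invariant half-space. In fact, if G is of minimal dimension with TY ⊆ Y + G for all T ∈ A, then Y ⊕ G is invariant under A. -/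
/-!
Let `W = Y + ∑_{T ∈ A} TY`. Since `A` is closed under products, `W` is `A`-invariant, and
`W ≤ Y + G` whenever `TY ≤ Y + G` for all `T ∈ A`. By the modular law `Y + (G ∩ W) = W`,
so `G ∩ W` has the same property; if `G` has minimal dimension this forces `G ≤ W`, i.e.
`Y + G = W`. Finally, adding a finite-dimensional space to a half-space gives a half-space.
-/

/-- A half-space: a closed subspace with infinite dimension and infinite codimension. -/
def IsHalfSpace {X : Type*} [NormedAddCommGroup X] [NormedSpace ℂ X]
    (Y : Submodule ℂ X) : Prop :=
  IsClosed (Y : Set X) ∧ ¬ FiniteDimensional ℂ Y ∧ ¬ FiniteDimensional ℂ (X ⧸ Y)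

namespace Submodule

theorem CoFG.of_sup_of_fg {K V : Type*} [DivisionRing K] [AddCommGroup V] [Module K V]
    {Y G : Submodule K V} (h : (Y ⊔ G).CoFG) (hG : G.FG) : Y.CoFG := by
  obtain ⟨C, hC⟩ := exists_isCompl (Y ⊔ G)
  refine (hG.sup (h.fg_of_isCompl hC)).cofg_of_codisjoint (codisjoint_iff.2 ?_)
  rw [← hC.sup_eq_top]
  ac_rfl

section CommonError

variable {K V : Type*} [DivisionRing K] [AddCommGroup V] [Module K V]
  {S : Set (Module.End K V)} {Y G : Submodule K V}

theorem map_sup_iSup_map_le (hS : ∀ T ∈ S, ∀ U ∈ S, T * U ∈ S) {T : Module.End K V}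
    (hT : T ∈ S) : (Y ⊔ ⨆ U ∈ S, Y.map U).map T ≤ Y ⊔ ⨆ U ∈ S, Y.map U := by
  rw [map_sup]
  refine sup_le (le_sup_of_le_right (le_iSup₂_of_le T hT le_rfl))
    (map_le_iff_le_comap.2 <| iSup₂_le fun U hU => map_le_iff_le_comap.1 ?_)
  rw [← map_comp]
  exact le_sup_of_le_right (le_iSup₂_of_le (T * U) (hS T hT U hU) le_rfl)

theorem sup_eq_sup_iSup_map_of_minimal [FiniteDimensional K G]
    (hG : ∀ T ∈ S, Y.map T ≤ Y ⊔ G)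
    (hmin : ∀ F : Submodule K V, FiniteDimensional K F →
      (∀ T ∈ S, Y.map T ≤ Y ⊔ F) → Module.finrank K G ≤ Module.finrank K F) :
    Y ⊔ G = Y ⊔ ⨆ T ∈ S, Y.map T := by
  set W := Y ⊔ ⨆ T ∈ S, Y.map T
  have hW : W ≤ Y ⊔ G := sup_le le_sup_left (iSup₂_le hG)
  have modular : Y ⊔ G ⊓ W = W := by
    rw [← sup_inf_assoc_of_le G (le_sup_left : Y ≤ W), inf_eq_right.2 hW]
  have hGW : G ⊓ W = G := by
    refine eq_of_le_of_finrank_le inf_le_left (hmin _ inferInstance fun T hT => ?_)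
    rw [modular]
    exact le_sup_of_le_right (le_iSup₂_of_le T hT le_rfl)
  exact le_antisymm (sup_le le_sup_left (hGW ▸ inf_le_right)) hW

theorem map_sup_le_of_minimal (hS : ∀ T ∈ S, ∀ U ∈ S, T * U ∈ S) [FiniteDimensional K G]
    (hG : ∀ T ∈ S, Y.map T ≤ Y ⊔ G)
    (hmin : ∀ F : Submodule K V, FiniteDimensional K F →
      (∀ T ∈ S, Y.map T ≤ Y ⊔ F) → Module.finrank K G ≤ Module.finrank K F)
    {T : Module.End K V} (hT : T ∈ S) : (Y ⊔ G).map T ≤ Y ⊔ G := by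
  rw [sup_eq_sup_iSup_map_of_minimal hG hmin]
  exact map_sup_iSup_map_le hS hT

end CommonError

end Submodule

theorem IsHalfSpace.sup {X : Type*} [NormedAddCommGroup X] [NormedSpace ℂ X]
    {Y G : Submodule ℂ X} (hY : IsHalfSpace Y) [FiniteDimensional ℂ G] :
    IsHalfSpace (Y ⊔ G) :=
  ⟨Y.isClosed_sup_finiteDimensional G hY.1,
    fun _ => hY.2.1 (Submodule.finiteDimensional_of_le (le_sup_left : Y ≤ Y ⊔ G)),
    fun h => hY.2.2 <|
      Submodule.CoFG.of_sup_of_fg h ((Submodule.fg_iff_finiteDimensional G).2 inferInstance)⟩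

theorem common_error_implies_invariant_halfspace_general
    {X : Type*} [NormedAddCommGroup X] [NormedSpace ℂ X]
    (Y : Submodule ℂ X) (hY : IsHalfSpace Y)
    (A : NonUnitalSubalgebra ℂ (X →L[ℂ] X))
    (F : Submodule ℂ X) (hF : FiniteDimensional ℂ F)
    (hAF : ∀ T ∈ A, Y.map (T : X →ₗ[ℂ] X) ≤ Y ⊔ F) :
    (∃ Z : Submodule ℂ X, IsHalfSpace Z ∧ ∀ T ∈ A, Z.map (T : X →ₗ[ℂ] X) ≤ Z) ∧
      ∀ G : Submodule ℂ X, FiniteDimensional ℂ G →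
        (∀ T ∈ A, Y.map (T : X →ₗ[ℂ] X) ≤ Y ⊔ G) →
        (∀ F' : Submodule ℂ X, FiniteDimensional ℂ F' →
          (∀ T ∈ A, Y.map (T : X →ₗ[ℂ] X) ≤ Y ⊔ F') → Module.finrank ℂ G ≤ Module.finrank ℂ F') →
        ∀ T ∈ A, (Y ⊔ G).map (T : X →ₗ[ℂ] X) ≤ Y ⊔ G := by
  set S : Set (Module.End ℂ X) := (↑) '' (A : Set (X →L[ℂ] X))
  have hS : ∀ T ∈ S, ∀ U ∈ S, T * U ∈ S := by
    rintro _ ⟨T, hT, rfl⟩ _ ⟨U, hU, rfl⟩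
    exact ⟨T * U, mul_mem hT hU, rfl⟩
  refine (and_iff_right_of_imp fun minimal_invariant => ?_).2 fun G _ hG hmin T hT =>
    Submodule.map_sup_le_of_minimal hS (Set.forall_mem_image.2 hG)
      (fun F' hF' h => hmin F' hF' (Set.forall_mem_image.1 h)) ⟨T, hT, rfl⟩
  obtain ⟨G, ⟨hGfd, hG⟩, hmin⟩ :=
    (measure fun G : Submodule ℂ X => Module.finrank ℂ G).wf.has_min
      {G | FiniteDimensional ℂ G ∧ ∀ T ∈ A, Y.map (T : X →ₗ[ℂ] X) ≤ Y ⊔ G}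
      ⟨F, hF, hAF⟩
  exact ⟨Y ⊔ G, hY.sup,
    minimal_invariant G hGfd hG fun F' hF' h => not_lt.1 (hmin F' ⟨hF', h⟩)⟩

theorem common_error_implies_invariant_halfspace
    {X : Type*} [NormedAddCommGroup X] [NormedSpace ℂ X] [CompleteSpace X]
    (Y : Submodule ℂ X) (hY : IsHalfSpace Y)
    (A : NonUnitalSubalgebra ℂ (X →L[ℂ] X))
    (F : Submodule ℂ X) (hF : FiniteDimensional ℂ F)
    (hAF : ∀ T ∈ A, Y.map (T : X →ₗ[ℂ] X) ≤ Y ⊔ F) :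
    (∃ Z : Submodule ℂ X, IsHalfSpace Z ∧ ∀ T ∈ A, Z.map (T : X →ₗ[ℂ] X) ≤ Z) ∧
      ∀ G : Submodule ℂ X, FiniteDimensional ℂ G →
        (∀ T ∈ A, Y.map (T : X →ₗ[ℂ] X) ≤ Y ⊔ G) →
        (∀ F' : Submodule ℂ X, FiniteDimensional ℂ F' →
          (∀ T ∈ A, Y.map (T : X →ₗ[ℂ] X) ≤ Y ⊔ F') → Module.finrank ℂ G ≤ Module.finrank ℂ F') →
        ∀ T ∈ A, (Y ⊔ G).map (T : X →ₗ[ℂ] X) ≤ Y ⊔ G :=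
  common_error_implies_invariant_halfspace_general Y hY A F hF hAF
end

section
/- Let Y be a linear subspace of a vector space X, let u₁,…,u_N be linearly independent vectors with span{u_i} ∩ Y = {0}, and let v₁,…,v_N ∈ X be arbitrary. Then for all but finitely many scalars α, the vectors v₁ + αu₁, …, v_N + αu_N are linearly independent and their span intersects Y trivially. -/
/-!
The condition on `v + α • u` says exactly that its image in `X ⧸ Y` is linearly independent, and
the images of the `u i` are linearly independent there. A linear map `T : X ⧸ Y → Kᴺ` sending
`u i` to the `i`-th unit vector turns `v + α • u` into the rows of `α • 1 + C` for a fixed matrix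
`C`, which is invertible unless `α` lies in the finite spectrum of `-C`.
-/

open Set Submodule

theorem Submodule.linearIndependent_mkQ_comp_iff {R M ι : Type*} [Ring R] [AddCommGroup M]
    [Module R M] (Y : Submodule R M) (w : ι → M) :
    LinearIndependent R (Y.mkQ ∘ w) ↔ LinearIndependent R w ∧ span R (range w) ⊓ Y = ⊥ := by
  rw [← disjoint_iff]
  refine ⟨fun h => ⟨h.of_comp, by simpa using range_ker_disjoint h⟩, fun ⟨hw, hdisj⟩ => ?_⟩
  exact hw.map (by rwa [ker_mkQ])

theorem LinearIndependent.exists_linearMap_apply_eq_single {K V ι : Type*} [Field K]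
    [AddCommGroup V] [Module K V] [Fintype ι] [DecidableEq ι] {u : ι → V}
    (hu : LinearIndependent K u) : ∃ T : V →ₗ[K] ι → K, ∀ i, T (u i) = Pi.single i 1 := by
  obtain ⟨T, hT⟩ := LinearMap.exists_extend (Module.Basis.span hu).equivFun.toLinearMap
  refine ⟨T, fun i => ?_⟩
  have hui : u i = (span K (range u)).subtype (Module.Basis.span hu i) := by simp
  ext j
  rw [hui, ← LinearMap.comp_apply, hT, LinearEquiv.coe_coe, Module.Basis.equivFun_self,
    Pi.single_apply]
  exact if_congr eq_comm rfl rfl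

theorem finite_setOf_not_linearIndependent_add_smul {K V ι : Type*} [Field K] [AddCommGroup V]
    [Module K V] [Fintype ι] [DecidableEq ι] {u : ι → V} (hu : LinearIndependent K u)
    (v : ι → V) : {α : K | ¬ LinearIndependent K (fun i => v i + α • u i)}.Finite := by
  obtain ⟨T, hT⟩ := hu.exists_linearMap_apply_eq_single
  set C : Matrix ι ι K := Matrix.of fun i => T (v i)
  refine (Matrix.finite_spectrum (-C)).subset fun α hα => ?_
  by_contra hα_reg
  apply hα
  have hrows : (fun i => (algebraMap K _ α - -C) i) = fun i => T (v i + α • u i) := by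
    funext i j
    simp [C, hT, Algebra.algebraMap_eq_smul_one, Matrix.one_apply, Pi.single_apply, eq_comm,
      add_comm]
  have hT_indep : LinearIndependent K (T ∘ fun i => v i + α • u i) := by
    change LinearIndependent K (fun i => T (v i + α • u i))
    rw [← hrows]
    exact Matrix.linearIndependent_rows_iff_isUnit.mpr (spectrum.notMem_iff.mp hα_reg)
  exact hT_indep.of_comp

theorem perturbation_linear_independent_cofinite
    {X : Type*} [AddCommGroup X] [Module ℂ X]
    (Y : Submodule ℂ X) (N : ℕ) (u v : Fin N → X)
    (hu : LinearIndependent ℂ u)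
    (huY : Submodule.span ℂ (Set.range u) ⊓ Y = ⊥) :
    {α : ℂ | ¬ (LinearIndependent ℂ (fun i => v i + α • u i) ∧
      Submodule.span ℂ (Set.range fun i => v i + α • u i) ⊓ Y = ⊥)}.Finite := by
  have hu_quot : LinearIndependent ℂ (Y.mkQ ∘ u) :=
    (Y.linearIndependent_mkQ_comp_iff u).mpr ⟨hu, huY⟩
  convert finite_setOf_not_linearIndependent_add_smul hu_quot (Y.mkQ ∘ v) using 3 with α
  rw [← Y.linearIndependent_mkQ_comp_iff]
  simp [Function.comp_def]
end

section
/- Let A be an algebra of bounded operators on a Banach space X, Y a closed subspace, and N ∈ ℕ such that d_{Y,T} ≤ N for all T ∈ A. Then d_{Y,T} ≤ N for every T in the weak operator topology closure of A. -/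
/-! `T Y ⊆ Y + F` for some `F` with `dim F ≤ N` says exactly that the image of `T Y` in `X ⧸ Y` has
dimension at most `N`. Since `Y` is closed, `X ⧸ Y` is a normed space, and Hahn–Banach turns this
into: `det (f j (T (y i))) = 0` for all `y₀, …, y_N ∈ Y` and all continuous functionals
`f₀, …, f_N` vanishing on `Y`. Each of these determinants is a WOT-continuous function of `T`, so
the operators satisfying the bound form a WOT-closed set, which contains the closure of `A`. -/

open Module

section DivisionRing

variable {K U V : Type*} [DivisionRing K] [AddCommGroup U] [Module K U] [AddCommGroup V]
  [Module K V]

theorem LinearMap.rank_le_nat_iff_forall_not_linearIndependent (g : U →ₗ[K] V) {N : ℕ} :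
    g.rank ≤ N ↔ ∀ u : Fin (N + 1) → U, ¬LinearIndependent K (g ∘ u) := by
  rw [LinearMap.rank, ← not_lt, ← Cardinal.natCast_add_one_le_iff, ← Nat.cast_add_one,
    le_rank_iff, not_exists]
  constructor
  · intro h u hu
    exact h (fun i => ⟨g (u i), LinearMap.mem_range_self g (u i)⟩)
      (.of_comp (LinearMap.range g).subtype hu)
  · intro h v hv
    choose u hu using fun i => LinearMap.mem_range.1 (v i).2
    have hgu : g ∘ u = (LinearMap.range g).subtype ∘ v := funext hu
    exact h u (hgu ▸ hv.map' _ (Submodule.ker_subtype _))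

theorem Submodule.exists_finrank_le_range_le_sup_iff_rank_mkQ_comp_le (Y : Submodule K V)
    (φ : U →ₗ[K] V) (N : ℕ) :
    (∃ F : Submodule K V, FiniteDimensional K F ∧ finrank K F ≤ N ∧ LinearMap.range φ ≤ Y ⊔ F) ↔
      (Y.mkQ ∘ₗ φ).rank ≤ N := by
  constructor
  · rintro ⟨F, hF, hFN, hφ⟩
    calc (Y.mkQ ∘ₗ φ).rank = Module.rank K ((LinearMap.range φ).map Y.mkQ) := by
          rw [LinearMap.rank, LinearMap.range_comp]
      _ ≤ Module.rank K (F.map Y.mkQ) := Submodule.rank_mono <| by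
          simpa [Submodule.map_sup, Submodule.mkQ_map_self] using Submodule.map_mono (f := Y.mkQ) hφ
      _ ≤ Module.rank K F := rank_map_le _ _
      _ = finrank K F := (finrank_eq_rank K F).symm
      _ ≤ N := by exact_mod_cast hFN
  · intro hN
    set ψ := Y.mkQ ∘ₗ φ
    have : FiniteDimensional K (LinearMap.range ψ) :=
      rank_lt_aleph0_iff.1 (hN.trans_lt Cardinal.natCast_lt_aleph0)
    -- `F` is the image under `φ` of a section of `U → range ψ`.
    obtain ⟨σ, hσ⟩ := ψ.rangeRestrict.exists_rightInverse_of_surjective ψ.range_rangeRestrict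
    refine ⟨LinearMap.range (φ ∘ₗ σ), inferInstance, ?_, ?_⟩
    · exact (LinearMap.finrank_range_le _).trans (finrank_le_of_rank_le hN)
    · rintro _ ⟨u, rfl⟩
      refine Submodule.mem_sup.2
        ⟨φ u - φ (σ (ψ.rangeRestrict u)), ?_, _, ⟨_, rfl⟩, sub_add_cancel _ _⟩
      have hψσ := congr_arg Subtype.val (LinearMap.congr_fun hσ (ψ.rangeRestrict u))
      rw [← Submodule.Quotient.mk_eq_zero, ← Submodule.mkQ_apply, map_sub, sub_eq_zero]
      exact hψσ.symm

end DivisionRing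

theorem Submodule.linearIndependent_mkQ_comp_of_det_ne_zero {K V ι : Type*} [Field K]
    [AddCommGroup V] [Module K V] [Fintype ι] [DecidableEq ι] {Y : Submodule K V} {z : ι → V}
    (f : ι → Module.Dual K V) (hf : ∀ j, ∀ y ∈ Y, f j y = 0)
    (hdet : (Matrix.of fun i j => f j (z i)).det ≠ 0) :
    LinearIndependent K (Y.mkQ ∘ z) :=
  .of_comp (LinearMap.pi fun j => Y.liftQ (f j) fun y hy => hf j y hy)
    (Matrix.linearIndependent_rows_of_det_ne_zero hdet)

section RCLike

variable {𝕜 E : Type*} [RCLike 𝕜] [NormedAddCommGroup E] [NormedSpace 𝕜 E]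

theorem LinearIndependent.exists_strongDual_apply_eq_ite {ι : Type*} [Finite ι] [DecidableEq ι]
    {v : ι → E} (hv : LinearIndependent 𝕜 v) :
    ∃ g : ι → StrongDual 𝕜 E, ∀ i j, g j (v i) = if i = j then 1 else 0 := by
  have : FiniteDimensional 𝕜 (Submodule.span 𝕜 (Set.range v)) :=
    FiniteDimensional.span_of_finite 𝕜 (Set.finite_range v)
  let b := Basis.span hv
  choose g hg using fun j =>
    StrongDual.exists_extension _ (LinearMap.toContinuousLinearMap (b.coord j))
  refine ⟨g, fun i j => ?_⟩
  rw [show v i = b i from (congr_arg Subtype.val (Basis.span_apply hv i)).symm, hg]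
  simp [Finsupp.single_apply]

theorem Submodule.exists_det_ne_zero_of_linearIndependent_mkQ_comp {ι : Type*} [Fintype ι]
    [DecidableEq ι] {Y : Submodule 𝕜 E} (hY : IsClosed (Y : Set E)) {z : ι → E}
    (hz : LinearIndependent 𝕜 (Y.mkQ ∘ z)) :
    ∃ f : ι → StrongDual 𝕜 E, (∀ j, ∀ y ∈ Y, f j y = 0) ∧
      (Matrix.of fun i j => f j (z i)).det ≠ 0 := by
  have : IsClosed (Y : Set E) := hY
  obtain ⟨g, hg⟩ := hz.exists_strongDual_apply_eq_ite
  refine ⟨fun j => g j ∘L Y.mkQL, fun j y hy => ?_, ?_⟩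
  · simp [(Submodule.Quotient.mk_eq_zero Y).2 hy]
  · have hone : (Matrix.of fun i j => (g j ∘L Y.mkQL) (z i)) = 1 := by
      ext i j
      simpa [Matrix.one_apply] using hg i j
    rw [hone, Matrix.det_one]
    exact one_ne_zero

end RCLike

section Operators

open ContinuousLinearMapWOT

variable {𝕜 X : Type*} [RCLike 𝕜] [NormedAddCommGroup X] [NormedSpace 𝕜 X] {Y : Submodule 𝕜 X}

theorem exists_finrank_le_map_le_sup_iff_det_eq_zero (hY : IsClosed (Y : Set X))
    (T : X →ₗ[𝕜] X) (N : ℕ) :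
    (∃ F : Submodule 𝕜 X, FiniteDimensional 𝕜 F ∧ finrank 𝕜 F ≤ N ∧ Y.map T ≤ Y ⊔ F) ↔
      ∀ (y : Fin (N + 1) → Y) (f : Fin (N + 1) → StrongDual 𝕜 X), (∀ j, ∀ x ∈ Y, f j x = 0) →
        (Matrix.of fun i j => f j (T (y i))).det = 0 := by
  have hmap : Y.map T = LinearMap.range (T ∘ₗ Y.subtype) := by
    rw [LinearMap.range_comp, Submodule.range_subtype]
  rw [hmap, Submodule.exists_finrank_le_range_le_sup_iff_rank_mkQ_comp_le,
    LinearMap.rank_le_nat_iff_forall_not_linearIndependent]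
  refine forall_congr' fun y => ⟨fun hy f hf => ?_, fun hy hli => ?_⟩
  · by_contra hdet
    exact hy (Submodule.linearIndependent_mkQ_comp_of_det_ne_zero (fun j => f j) hf hdet)
  · obtain ⟨f, hf, hdet⟩ := Submodule.exists_det_ne_zero_of_linearIndependent_mkQ_comp hY hli
    exact hdet (hy f hf)

theorem isClosed_setOf_exists_finrank_le_map_le_sup (hY : IsClosed (Y : Set X)) (N : ℕ) :
    IsClosed {S : X →WOT[𝕜] X | ∃ F : Submodule 𝕜 X, FiniteDimensional 𝕜 F ∧
      finrank 𝕜 F ≤ N ∧ Y.map (toCLM S : X →ₗ[𝕜] X) ≤ Y ⊔ F} := by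
  simp_rw [exists_finrank_le_map_le_sup_iff_det_eq_zero hY, Set.ofPred_forall]
  refine isClosed_iInter fun y => isClosed_iInter fun f => isClosed_iInter fun _ => ?_
  refine isClosed_eq ?_ continuous_const
  exact (continuous_matrix fun i j => continuous_dual_apply (y i : X) (f j)).matrix_det

end Operators

theorem error_dim_bound_of_WOT_closure_general
    {X : Type*} [NormedAddCommGroup X] [NormedSpace ℂ X]
    (A : NonUnitalSubalgebra ℂ (X →L[ℂ] X))
    (Y : Submodule ℂ X) (hYc : IsClosed (Y : Set X)) (N : ℕ)
    (hA : ∀ S ∈ A, ∃ F : Submodule ℂ X, FiniteDimensional ℂ F ∧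
      Module.finrank ℂ F ≤ N ∧ Y.map (S : X →ₗ[ℂ] X) ≤ Y ⊔ F)
    (T : X →L[ℂ] X)
    (hT : ContinuousLinearMapWOT.ofCLM T ∈
      closure (ContinuousLinearMapWOT.ofCLM '' (A : Set (X →L[ℂ] X)))) :
    ∃ F : Submodule ℂ X, FiniteDimensional ℂ F ∧
      Module.finrank ℂ F ≤ N ∧ Y.map (T : X →ₗ[ℂ] X) ≤ Y ⊔ F := by
  refine closure_minimal ?_ (isClosed_setOf_exists_finrank_le_map_le_sup hYc N) hT
  rintro _ ⟨S, hS, rfl⟩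
  exact hA S hS

theorem error_dim_bound_of_WOT_closure
    {X : Type*} [NormedAddCommGroup X] [NormedSpace ℂ X] [CompleteSpace X]
    (A : NonUnitalSubalgebra ℂ (X →L[ℂ] X))
    (Y : Submodule ℂ X) (hYc : IsClosed (Y : Set X)) (N : ℕ)
    (hA : ∀ S ∈ A, ∃ F : Submodule ℂ X, FiniteDimensional ℂ F ∧
      Module.finrank ℂ F ≤ N ∧ Y.map (S : X →ₗ[ℂ] X) ≤ Y ⊔ F)
    (T : X →L[ℂ] X)
    (hT : ContinuousLinearMapWOT.ofCLM T ∈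
      closure (ContinuousLinearMapWOT.ofCLM '' (A : Set (X →L[ℂ] X)))) :
    ∃ F : Submodule ℂ X, FiniteDimensional ℂ F ∧
      Module.finrank ℂ F ≤ N ∧ Y.map (T : X →ₗ[ℂ] X) ≤ Y ⊔ F :=
  error_dim_bound_of_WOT_closure_general A Y hYc N hA T hT
end

section
/- Let A be an algebra of bounded operators on a Banach space X, Y a closed subspace, and N ∈ ℕ such that d_{Y,T} ≤ N for all T ∈ A. Then d_{Y,T} ≤ N for every T in the strong operator topology closure of A. -/
/-!
`d_{Y,S}` is the rank of the compression `Y → X ⧸ Y`, `y ↦ S y + Y`, of `S`, and `X ⧸ Y` is a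
normed space because `Y` is closed. Linear independence of finitely many vectors is an open
condition in a normed space, so `rank ≤ N` passes to pointwise limits; and since the quotient map
is 1-Lipschitz, the compression of `T` is a pointwise limit of compressions of elements of `A`.
-/

open Module

namespace Submodule

variable {K M : Type*} [Field K] [AddCommGroup M] [Module K M]

theorem exists_finrank_le_and_le_sup_iff_rank_map_mkQ_le (Y Z : Submodule K M) (N : ℕ) :
    (∃ F : Submodule K M, FiniteDimensional K F ∧ finrank K F ≤ N ∧ Z ≤ Y ⊔ F) ↔
      Module.rank K (Z.map Y.mkQ) ≤ N := by
  constructor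
  · rintro ⟨F, hF, hFN, hZ⟩
    have hmap : Z.map Y.mkQ ≤ F.map Y.mkQ := by
      simpa only [map_sup, mkQ_map_self, bot_sup_eq] using map_mono (f := Y.mkQ) hZ
    calc Module.rank K (Z.map Y.mkQ) ≤ Module.rank K (F.map Y.mkQ) := rank_mono hmap
      _ ≤ Module.rank K F := rank_map_le _ _
      _ = finrank K F := (finrank_eq_rank K F).symm
      _ ≤ N := Nat.cast_le.mpr hFN
  · intro hrank
    obtain ⟨g, hg⟩ := Y.mkQ.exists_rightInverse_of_surjective Y.range_mkQ
    have hqg (u : M ⧸ Y) : Y.mkQ (g u) = u := LinearMap.congr_fun hg u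
    have hF : Module.rank K ((Z.map Y.mkQ).map g) ≤ N := (rank_map_le _ _).trans hrank
    have : FiniteDimensional K ((Z.map Y.mkQ).map g) :=
      rank_lt_aleph0_iff.mp (hF.trans_lt Cardinal.natCast_lt_aleph0)
    refine ⟨_, inferInstance, finrank_le_of_rank_le hF, fun z hz => ?_⟩
    have hY : z - g (Y.mkQ z) ∈ Y := by
      rw [← Quotient.mk_eq_zero, ← mkQ_apply, map_sub, hqg, sub_self]
    simpa using add_mem_sup hY (mem_map_of_mem (f := g) (mem_map_of_mem (f := Y.mkQ) hz))

end Submodule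

section NormedSpace

variable {𝕜 E : Type*} [NontriviallyNormedField 𝕜] [CompleteSpace 𝕜]
  [NormedAddCommGroup E] [NormedSpace 𝕜 E]

theorem LinearIndependent.exists_forall_norm_sub_lt {ι : Type*} [Fintype ι] {w : ι → E}
    (hw : LinearIndependent 𝕜 w) :
    ∃ ε > 0, ∀ u : ι → E, (∀ i, ‖u i - w i‖ < ε) → LinearIndependent 𝕜 u := by
  obtain ⟨ε, hε, h⟩ := Metric.eventually_nhds_iff.mp hw.eventually
  exact ⟨ε, hε, fun u hu => h (by rwa [dist_eq_norm, pi_norm_lt_iff hε])⟩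

/-- The maps of rank at most `N` are closed for the topology of pointwise convergence. -/
theorem LinearMap.rank_le_of_forall_exists_norm_sub_lt {V : Type*} [AddCommGroup V]
    [Module 𝕜 V] (g : V →ₗ[𝕜] E) (N : ℕ)
    (h : ∀ ε > (0 : ℝ), ∀ s : Finset V,
      ∃ f : V →ₗ[𝕜] E, f.rank ≤ N ∧ ∀ x ∈ s, ‖f x - g x‖ < ε) :
    g.rank ≤ N := by
  by_contra! hlt
  obtain ⟨s, hs, hind⟩ := (LinearMap.le_rank_iff_exists_linearIndependent_finset (n := N + 1)).mp
    (mod_cast Cardinal.natCast_add_one_le_iff.mpr hlt)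
  obtain ⟨ε, hε, hnear⟩ := hind.exists_forall_norm_sub_lt
  obtain ⟨f, hf, hfg⟩ := h ε hε s
  have hfind : LinearIndependent 𝕜 fun x : (s : Set V) => f x := hnear _ fun x => hfg x x.2
  have : ((N + 1 : ℕ) : Cardinal) ≤ f.rank :=
    LinearMap.le_rank_iff_exists_linearIndependent_finset.mpr ⟨s, hs, hfind⟩
  exact hf.not_gt (Cardinal.natCast_add_one_le_iff.mp (mod_cast this))

end NormedSpace

theorem error_dim_bound_of_SOT_closure_general
    {X : Type*} [NormedAddCommGroup X] [NormedSpace ℂ X]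
    (A : NonUnitalSubalgebra ℂ (X →L[ℂ] X))
    (Y : Submodule ℂ X) (hYc : IsClosed (Y : Set X)) (N : ℕ)
    (hA : ∀ S ∈ A, ∃ F : Submodule ℂ X, FiniteDimensional ℂ F ∧
      Module.finrank ℂ F ≤ N ∧ Y.map (S : X →ₗ[ℂ] X) ≤ Y ⊔ F)
    (T : X →L[ℂ] X)
    -- `T` lies in the closure of `A` in the strong operator topology:
    (hT : ∀ ε > (0 : ℝ), ∀ s : Finset X, ∃ S ∈ A, ∀ x ∈ s, ‖S x - T x‖ < ε) :
    ∃ F : Submodule ℂ X, FiniteDimensional ℂ F ∧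
      Module.finrank ℂ F ≤ N ∧ Y.map (T : X →ₗ[ℂ] X) ≤ Y ⊔ F := by
  have : IsClosed (Y : Set X) := hYc
  have hrank (S : X →L[ℂ] X) : (Y.mkQ ∘ₗ (S : X →ₗ[ℂ] X) ∘ₗ Y.subtype).rank =
      Module.rank ℂ ((Y.map (S : X →ₗ[ℂ] X)).map Y.mkQ) := by
    rw [LinearMap.rank, LinearMap.range_comp, LinearMap.range_comp, Submodule.range_subtype]
  simp only [Submodule.exists_finrank_le_and_le_sup_iff_rank_map_mkQ_le, ← hrank] at hA ⊢
  refine LinearMap.rank_le_of_forall_exists_norm_sub_lt _ N fun ε hε s => ?_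
  obtain ⟨S, hSA, hS⟩ := hT ε hε (s.map (Function.Embedding.subtype _))
  refine ⟨_, hA S hSA, fun y hy => ?_⟩
  calc ‖Y.mkQ (S y) - Y.mkQ (T y)‖ = ‖Y.mkQ (S y - T y)‖ := by rw [map_sub]
    _ ≤ ‖S y - T y‖ := Submodule.Quotient.norm_mk_le Y _
    _ < ε := hS y (Finset.mem_map_of_mem _ hy)

theorem error_dim_bound_of_SOT_closure
    {X : Type*} [NormedAddCommGroup X] [NormedSpace ℂ X] [CompleteSpace X]
    (A : NonUnitalSubalgebra ℂ (X →L[ℂ] X))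
    (Y : Submodule ℂ X) (hYc : IsClosed (Y : Set X)) (N : ℕ)
    (hA : ∀ S ∈ A, ∃ F : Submodule ℂ X, FiniteDimensional ℂ F ∧
      Module.finrank ℂ F ≤ N ∧ Y.map (S : X →ₗ[ℂ] X) ≤ Y ⊔ F)
    (T : X →L[ℂ] X)
    -- `T` lies in the closure of `A` in the strong operator topology:
    (hT : ∀ ε > (0 : ℝ), ∀ s : Finset X, ∃ S ∈ A, ∀ x ∈ s, ‖S x - T x‖ < ε) :
    ∃ F : Submodule ℂ X, FiniteDimensional ℂ F ∧
      Module.finrank ℂ F ≤ N ∧ Y.map (T : X →ₗ[ℂ] X) ≤ Y ⊔ F :=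
  error_dim_bound_of_SOT_closure_general A Y hYc N hA T hT
end

section
/- Let A be a norm-closed algebra of bounded operators on a Banach space X and Y a half-space. Then Y is almost invariant under A if and only if Y is almost invariant under the WOT-closure of A. -/
/-!
`Y` is almost invariant under `T` exactly when the compression `y ↦ T y + Y : Y → X ⧸ Y` has
finite rank. The condition "rank ≤ n" is WOT-closed: finitely many vectors of `X ⧸ Y` are
independent iff some continuous functionals give a nonzero determinant, and these determinants
depend WOT-continuously on `T`. On the Banach space `A` the closed sets `{rank ≤ n}` cover, so by
Baire one of them contains a ball around some `T₀`; as the rank is subadditive and does not grow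
under scaling, writing `S` as a multiple of `(T₀ + c S) - T₀` bounds the rank by `2 n` on all of
`A`. That bound is WOT-closed, so it holds on the WOT-closure as well.
-/

open Set Cardinal Filter Topology

namespace Submodule

variable {K M : Type*} [Field K] [AddCommGroup M] [Module K M] (Y : Submodule K M)

def defectMap (T : M →ₗ[K] M) : Y →ₗ[K] M ⧸ Y := Y.mkQ ∘ₗ T ∘ₗ Y.subtype

@[simp] lemma defectMap_apply (T : M →ₗ[K] M) (y : Y) : Y.defectMap T y = Y.mkQ (T y) := rfl

lemma range_defectMap (T : M →ₗ[K] M) :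
    LinearMap.range (Y.defectMap T) = (Y.map T).map Y.mkQ := by
  simp only [defectMap, LinearMap.range_comp, Submodule.range_subtype]

lemma map_le_sup_iff_range_defectMap_le {T : M →ₗ[K] M} {F : Submodule K M} :
    Y.map T ≤ Y ⊔ F ↔ LinearMap.range (Y.defectMap T) ≤ F.map Y.mkQ := by
  rw [range_defectMap, Submodule.map_le_iff_le_comap (f := Y.mkQ), Submodule.comap_map_mkQ]

theorem exists_finiteDimensional_map_le_sup_iff (T : M →ₗ[K] M) :
    (∃ F : Submodule K M, FiniteDimensional K F ∧ Y.map T ≤ Y ⊔ F) ↔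
      (Y.defectMap T).rank < ℵ₀ := by
  rw [LinearMap.rank, Module.rank_lt_aleph0_iff]
  constructor
  · rintro ⟨F, hF, hle⟩
    exact Submodule.finiteDimensional_of_le (Y.map_le_sup_iff_range_defectMap_le.1 hle)
  · intro h
    obtain ⟨g, hg⟩ := Y.mkQ.exists_rightInverse_of_surjective Y.range_mkQ
    refine ⟨(LinearMap.range (Y.defectMap T)).map g, inferInstance,
      Y.map_le_sup_iff_range_defectMap_le.2 ?_⟩
    rw [← Submodule.map_comp, hg, Submodule.map_id]

lemma rank_defectMap_add_le (S T : M →ₗ[K] M) :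
    (Y.defectMap (S + T)).rank ≤ (Y.defectMap S).rank + (Y.defectMap T).rank := by
  have : Y.defectMap (S + T) = Y.defectMap S + Y.defectMap T := LinearMap.ext fun y => by simp
  exact this ▸ LinearMap.rank_add_le _ _

lemma rank_defectMap_smul_le (c : K) (T : M →ₗ[K] M) :
    (Y.defectMap (c • T)).rank ≤ (Y.defectMap T).rank := by
  have : Y.defectMap (c • T) = Y.defectMap T ∘ₗ (c • LinearMap.id) :=
    LinearMap.ext fun y => by simp
  exact this ▸ LinearMap.rank_comp_le_left _ _

end Submodule

theorem exists_nat_bound_of_subadditive {𝕜 E : Type*} [NontriviallyNormedField 𝕜]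
    [NormedAddCommGroup E] [NormedSpace 𝕜 E] [CompleteSpace E] {r : E → Cardinal}
    (hadd : ∀ x y, r (x + y) ≤ r x + r y) (hsmul : ∀ (c : 𝕜) x, r (c • x) ≤ r x)
    (hclosed : ∀ n : ℕ, IsClosed {x | r x ≤ n}) (hfin : ∀ x, r x < ℵ₀) :
    ∃ N : ℕ, ∀ x, r x ≤ N := by
  obtain ⟨m, x₀, hx₀⟩ := nonempty_interior_of_iUnion_of_closed hclosed
    (iUnion_eq_univ_iff.2 fun x => (lt_aleph0.1 (hfin x)).imp fun _ hn => hn.le)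
  refine ⟨m + m, fun x => ?_⟩
  have hnear : ∀ᶠ c : 𝕜 in 𝓝[≠] 0, x₀ + c • x ∈ interior {x | r x ≤ m} := by
    refine eventually_nhdsWithin_of_eventually_nhds ?_
    have : Tendsto (fun c : 𝕜 => x₀ + c • x) (𝓝 0) (𝓝 x₀) := by
      simpa using tendsto_const_nhds.add ((tendsto_id (x := 𝓝 (0 : 𝕜))).smul_const x)
    exact this.eventually (isOpen_interior.mem_nhds hx₀)
  obtain ⟨c, hc, hc0⟩ := (hnear.and self_mem_nhdsWithin).exists
  have hx : x = c⁻¹ • ((x₀ + c • x) + (-1 : 𝕜) • x₀) := by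
    rw [neg_one_smul, add_neg_cancel_comm, smul_smul, inv_mul_cancel₀ hc0, one_smul]
  calc r x = r (c⁻¹ • ((x₀ + c • x) + (-1 : 𝕜) • x₀)) := congrArg r hx
    _ ≤ r (x₀ + c • x) + r ((-1 : 𝕜) • x₀) := (hsmul _ _).trans (hadd _ _)
    _ ≤ m + m := add_le_add (interior_subset (s := {x | r x ≤ m}) hc)
      ((hsmul _ _).trans (interior_subset (s := {x | r x ≤ m}) hx₀))
    _ = ↑(m + m) := by push_cast; rfl

section SeparatingDual

variable {R V : Type*} [Field R] [TopologicalSpace R] [IsTopologicalRing R]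
  [AddCommGroup V] [TopologicalSpace V] [Module R V] [SeparatingDual R V]

theorem linearIndependent_iff_exists_det_dual_ne_zero {ι : Type*} [Fintype ι] [DecidableEq ι]
    {v : ι → V} :
    LinearIndependent R v ↔
      ∃ f : ι → StrongDual R V, (Matrix.of fun i j => f j (v i)).det ≠ 0 := by
  constructor
  · intro hv
    have hsurj := SeparatingDual.dualMap_surjective_iff.2
      (linearIndependent_iff_injective_fintypeLinearCombination.1 hv)
    choose f hf using fun j => hsurj (LinearMap.proj j)
    refine ⟨f, ?_⟩
    have hdual : (Matrix.of fun i j => f j (v i)) = 1 := by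
      ext i j
      have := LinearMap.congr_fun (hf j) (Pi.single i 1)
      simp only [Function.comp_apply, LinearMap.dualMap_apply, LinearMap.proj_apply,
        ContinuousLinearMap.coe_coe, Fintype.linearCombination_apply_single, one_smul] at this
      simpa [Matrix.one_apply, Pi.single_apply, eq_comm] using this
    simp [hdual]
  · rintro ⟨f, hf⟩
    exact LinearIndependent.of_comp (LinearMap.pi fun j => (f j : V →ₗ[R] R))
      (Matrix.linearIndependent_rows_of_det_ne_zero hf)

theorem isOpen_setOfPred_linearIndependent_of_continuous_dual [T1Space R] {Z ι : Type*}
    [TopologicalSpace Z] [Finite ι] {u : Z → ι → V}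
    (hu : ∀ i (f : StrongDual R V), Continuous fun z => f (u z i)) :
    IsOpen {z | LinearIndependent R (u z)} := by
  classical
  cases nonempty_fintype ι
  simp_rw [linearIndependent_iff_exists_det_dual_ne_zero, ofPred_exists]
  exact isOpen_iUnion fun f =>
    isOpen_ne_fun ((continuous_matrix fun i j => hu i (f j)).matrix_det) continuous_const

end SeparatingDual

section WOT

variable {𝕜 X : Type*} [NontriviallyNormedField 𝕜]

theorem Submodule.isClosed_setOfPred_rank_defectMap_le [AddCommGroup X] [TopologicalSpace X]
    [IsTopologicalAddGroup X] [Module 𝕜 X] [ContinuousConstSMul 𝕜 X] (Y : Submodule 𝕜 X)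
    [SeparatingDual 𝕜 (X ⧸ Y)] (n : ℕ) :
    IsClosed {B : X →WOT[𝕜] X | (Y.defectMap (B.toCLM : X →ₗ[𝕜] X)).rank ≤ n} := by
  simp only [← isOpen_compl_iff, compl_ofPred, not_le, ← natCast_add_one_le_iff,
    ← Nat.cast_add_one, LinearMap.le_rank_iff_exists_linearIndependent_finset, ofPred_exists,
    ← exists_prop]
  refine isOpen_biUnion fun s _ => ?_
  refine isOpen_setOfPred_linearIndependent_of_continuous_dual fun y f => ?_
  simpa using ContinuousLinearMapWOT.continuous_dual_apply (y : X) (f.comp Y.mkQL)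

theorem Submodule.exists_forall_rank_defectMap_le [NormedAddCommGroup X] [NormedSpace 𝕜 X]
    [CompleteSpace X] (Y : Submodule 𝕜 X) [SeparatingDual 𝕜 (X ⧸ Y)]
    (A : Submodule 𝕜 (X →L[𝕜] X)) (hAc : IsClosed (A : Set (X →L[𝕜] X)))
    (hA : ∀ T ∈ A, (Y.defectMap (T : X →ₗ[𝕜] X)).rank < ℵ₀) :
    ∃ N : ℕ, ∀ T ∈ A, (Y.defectMap (T : X →ₗ[𝕜] X)).rank ≤ N := by
  have : CompleteSpace A := hAc.completeSpace_coe
  let r : A → Cardinal := fun S => (Y.defectMap ((S : X →L[𝕜] X) : X →ₗ[𝕜] X)).rank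
  have hadd (S T : A) : r (S + T) ≤ r S + r T := by
    simpa only [r, Submodule.coe_add, ContinuousLinearMap.toLinearMap_add] using
      Y.rank_defectMap_add_le _ _
  have hclosed (n : ℕ) : IsClosed {S | r S ≤ n} :=
    (Y.isClosed_setOfPred_rank_defectMap_le n).preimage
      (ContinuousLinearMapWOT.continuous_ofCLM.comp continuous_subtype_val)
  obtain ⟨N, hN⟩ := exists_nat_bound_of_subadditive (𝕜 := 𝕜) hadd (fun c S => by
    simpa only [r, Submodule.coe_smul, ContinuousLinearMap.toLinearMap_smul] using
      Y.rank_defectMap_smul_le c _) hclosed (fun S => hA S S.2)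
  exact ⟨N, fun T hT => hN ⟨T, hT⟩⟩

end WOT

theorem almost_invariant_iff_WOT_closure_almost_invariant
    {X : Type*} [NormedAddCommGroup X] [NormedSpace ℂ X] [CompleteSpace X]
    (A : NonUnitalSubalgebra ℂ (X →L[ℂ] X))
    (hAc : IsClosed (A : Set (X →L[ℂ] X)))
    (Y : Submodule ℂ X) (hY : IsHalfSpace Y) :
    (∀ T ∈ A, ∃ F : Submodule ℂ X, FiniteDimensional ℂ F ∧ Y.map (T : X →ₗ[ℂ] X) ≤ Y ⊔ F) ↔
    (∀ T : X →L[ℂ] X,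
      ContinuousLinearMapWOT.ofCLM T ∈
        closure (ContinuousLinearMapWOT.ofCLM '' (A : Set (X →L[ℂ] X))) →
      ∃ F : Submodule ℂ X, FiniteDimensional ℂ F ∧ Y.map (T : X →ₗ[ℂ] X) ≤ Y ⊔ F) := by
  have : IsClosed (Y : Set X) := hY.1
  simp only [Y.exists_finiteDimensional_map_le_sup_iff]
  refine ⟨fun hA T hT => ?_, fun h T hT => h T (subset_closure (mem_image_of_mem _ hT))⟩
  obtain ⟨N, hN⟩ := Y.exists_forall_rank_defectMap_le A.toSubmodule hAc hA
  have hTN : (Y.defectMap (T : X →ₗ[ℂ] X)).rank ≤ N :=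
    closure_minimal (by rintro _ ⟨S, hS, rfl⟩; exact hN S hS)
      (Y.isClosed_setOfPred_rank_defectMap_le N) hT
  exact hTN.trans_lt natCast_lt_aleph0
end

section
/- Let Y be a half-space in a Banach space X almost invariant under T ∈ L(X). Then D_T(Y) = {y ∈ Y : Ty ∈ Y} is a half-space, and the codimension of D_T(Y) in Y equals d_{Y,T}. -/
/-- `errDim Y T` is the minimal dimension of a finite-dimensional subspace `F`
with `T Y ⊆ Y + F` (and `⊤` if no such `F` exists). -/
noncomputable def errDim {X : Type*} [NormedAddCommGroup X] [NormedSpace ℂ X]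
    (Y : Submodule ℂ X) (T : X →L[ℂ] X) : ℕ∞ :=
  sInf {n : ℕ∞ | ∃ F : Submodule ℂ X, FiniteDimensional ℂ F ∧
    (Module.finrank ℂ F : ℕ∞) = n ∧ Y.map (T : X →ₗ[ℂ] X) ≤ Y ⊔ F}

/-!
The map `y ↦ T y + Y` from `Y` to `X ⧸ Y` has kernel `D_T(Y)` and range the image `G` of `T Y`
in `X ⧸ Y`, so `Y ⧸ D_T(Y) ≅ G`. A subspace `F` satisfies `T Y ⊆ Y + F` exactly when the image
of `F` in `X ⧸ Y` contains `G`, and lifting `G` along a linear section of `X → X ⧸ Y` gives such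
an `F` of dimension `dim G`; hence `d_{Y,T} = dim G`, the codimension of `D_T(Y)` in `Y`.
Being of finite codimension in the half-space `Y`, and closed since `T` is continuous,
`D_T(Y)` is again a half-space.
-/

open Submodule Module

namespace Submodule

section Ring

variable {R M M' : Type*} [Ring R] [AddCommGroup M] [Module R M] [AddCommGroup M'] [Module R M']

theorem map_mkQ_le_map_mkQ_iff {Y N F : Submodule R M} :
    N.map Y.mkQ ≤ F.map Y.mkQ ↔ N ≤ Y ⊔ F := by
  rw [map_le_iff_le_comap, comap_map_mkQ]

noncomputable def quotientComapSubtypeEquivMapMkQ (f : M →ₗ[R] M') (Y : Submodule R M)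
    (W : Submodule R M') : (Y ⧸ (W.comap f).comap Y.subtype) ≃ₗ[R] (Y.map f).map W.mkQ :=
  let φ : Y →ₗ[R] M' ⧸ W := W.mkQ ∘ₗ f ∘ₗ Y.subtype
  have hker : LinearMap.ker φ = (W.comap f).comap Y.subtype := by
    rw [LinearMap.ker_comp, ker_mkQ, comap_comp]
  have hrange : LinearMap.range φ = (Y.map f).map W.mkQ := by
    rw [LinearMap.range_comp, LinearMap.range_comp, range_subtype]
  (quotEquivOfEq _ _ hker.symm).trans (φ.quotKerEquivRange.trans (LinearEquiv.ofEq _ _ hrange))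

end Ring

section DivisionRing

variable {K M : Type*} [DivisionRing K] [AddCommGroup M] [Module K M]

theorem finiteDimensional_map_mkQ_of_le_sup {Y N F : Submodule K M} [FiniteDimensional K F]
    (h : N ≤ Y ⊔ F) : FiniteDimensional K (N.map Y.mkQ) :=
  finiteDimensional_of_le (map_mkQ_le_map_mkQ_iff.mpr h)

theorem exists_finrank_eq_finrank_map_mkQ_le_sup (Y N : Submodule K M)
    [FiniteDimensional K (N.map Y.mkQ)] :
    ∃ F : Submodule K M, FiniteDimensional K F ∧
      finrank K F = finrank K (N.map Y.mkQ) ∧ N ≤ Y ⊔ F := by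
  obtain ⟨g, hg⟩ := Y.mkQ.exists_rightInverse_of_surjective (range_mkQ Y)
  have hg_inj : Function.Injective g :=
    Function.LeftInverse.injective (g := Y.mkQ) fun x => LinearMap.congr_fun hg x
  let e := equivMapOfInjective g hg_inj (N.map Y.mkQ)
  refine ⟨_, e.finiteDimensional, e.finrank_eq.symm, map_mkQ_le_map_mkQ_iff.mp ?_⟩
  rw [← map_comp, hg, map_id]

theorem sInf_finrank_of_le_sup_eq_finrank_map_mkQ (Y N : Submodule K M)
    [FiniteDimensional K (N.map Y.mkQ)] :
    sInf {n : ℕ∞ | ∃ F : Submodule K M, FiniteDimensional K F ∧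
      (finrank K F : ℕ∞) = n ∧ N ≤ Y ⊔ F} = finrank K (N.map Y.mkQ) := by
  refine le_antisymm ?_ (le_sInf ?_)
  · obtain ⟨F, hF, hrank, hle⟩ := exists_finrank_eq_finrank_map_mkQ_le_sup Y N
    exact sInf_le ⟨F, hF, by rw [hrank], hle⟩
  · rintro _ ⟨F, hF, rfl, hle⟩
    calc (finrank K (N.map Y.mkQ) : ℕ∞) ≤ finrank K (F.map Y.mkQ) := by
          exact_mod_cast finrank_mono (map_mkQ_le_map_mkQ_iff.mpr hle)
      _ ≤ finrank K F := by exact_mod_cast finrank_map_le _ _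

end DivisionRing

end Submodule

theorem IsHalfSpace.of_le_of_finiteDimensional_quotient {X : Type*} [NormedAddCommGroup X]
    [NormedSpace ℂ X] {Y D : Submodule ℂ X} (hY : IsHalfSpace Y) (hD : IsClosed (D : Set X))
    (hDY : D ≤ Y) [FiniteDimensional ℂ (Y ⧸ D.comap Y.subtype)] : IsHalfSpace D := by
  obtain ⟨-, hY_inf, hY_coinf⟩ := hY
  refine ⟨hD, fun hD_fin => hY_inf ?_, fun hD_cofin => hY_coinf ?_⟩
  · have := (comapSubtypeEquivOfLe hDY).symm.finiteDimensional
    exact Module.Finite.of_submodule_quotient (D.comap Y.subtype)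
  · exact Module.Finite.of_surjective _ (factor_surjective hDY)

theorem going_downwards_halfspace_general
    {X : Type*} [NormedAddCommGroup X] [NormedSpace ℂ X]
    (Y : Submodule ℂ X) (hY : IsHalfSpace Y) (T : X →L[ℂ] X)
    (hai : ∃ F : Submodule ℂ X, FiniteDimensional ℂ F ∧ Y.map (T : X →ₗ[ℂ] X) ≤ Y ⊔ F) :
    IsHalfSpace (Y ⊓ Y.comap (T : X →ₗ[ℂ] X)) ∧
      (Module.finrank ℂ (↥Y ⧸ (Y ⊓ Y.comap (T : X →ₗ[ℂ] X)).comap Y.subtype) : ℕ∞) =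
        errDim Y T := by
  obtain ⟨F, hF, hTY⟩ := hai
  have := finiteDimensional_map_mkQ_of_le_sup hTY
  have e : (Y ⧸ (Y ⊓ Y.comap (T : X →ₗ[ℂ] X)).comap Y.subtype) ≃ₗ[ℂ]
      (Y.map (T : X →ₗ[ℂ] X)).map Y.mkQ := by
    rw [comap_inf, comap_subtype_self, top_inf_eq]
    exact quotientComapSubtypeEquivMapMkQ (T : X →ₗ[ℂ] X) Y Y
  have := e.symm.finiteDimensional
  have hD_closed : IsClosed ((Y ⊓ Y.comap (T : X →ₗ[ℂ] X) : Submodule ℂ X) : Set X) :=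
    hY.1.inter (hY.1.preimage T.continuous)
  refine ⟨hY.of_le_of_finiteDimensional_quotient hD_closed inf_le_left, ?_⟩
  rw [errDim, sInf_finrank_of_le_sup_eq_finrank_map_mkQ, e.finrank_eq]

theorem going_downwards_halfspace
    {X : Type*} [NormedAddCommGroup X] [NormedSpace ℂ X] [CompleteSpace X]
    (Y : Submodule ℂ X) (hY : IsHalfSpace Y) (T : X →L[ℂ] X)
    (hai : ∃ F : Submodule ℂ X, FiniteDimensional ℂ F ∧ Y.map (T : X →ₗ[ℂ] X) ≤ Y ⊔ F) :
    IsHalfSpace (Y ⊓ Y.comap (T : X →ₗ[ℂ] X)) ∧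
      (Module.finrank ℂ (↥Y ⧸ (Y ⊓ Y.comap (T : X →ₗ[ℂ] X)).comap Y.subtype) : ℕ∞) =
        errDim Y T :=
  going_downwards_halfspace_general Y hY T hai
end

section
/- Let Y be a half-space in a Banach space X almost invariant under T ∈ L(X) with d_{Y,T} > 0. If d_{D_T^k(Y),T} ≥ d_{Y,T} and d_{U_T^k(Y),T} ≥ d_{Y,T} for all k ∈ ℕ, then d_{Y,T^m} ≥ m for all m ∈ ℕ. -/
/-!
Write `D_k` and `U_k` for the iterates of `D_T` and `U_T` on `Y`, and `d = d_{Y,T}`.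
Since `D_{k+1}` is the kernel of `z ↦ T^{k+1} z mod Y` on `D_k`, whose image has dimension at
most `d`, the hypothesis `d_{D_{k+1},T} ≥ d` forces `D_k = D_{k+1} + T D_{k+1}`. Iterating gives
`T Y ⊆ Y + T^{j+1} D_j` and then `U_m ⊆ Y + T^m Y`. The hypothesis on `U_k` makes the chain
`Y = U_0 < U_1 < ⋯ < U_m` strict, so any `F` with `T^m Y ⊆ Y + F` has dimension at least `m`.
-/

open Module Submodule

namespace Submodule

section Iterates

variable {R M : Type*} [Semiring R] [AddCommMonoid M] [Module R M]
  (L : Module.End R M) (Y : Submodule R M)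

-- `downIter L Y k` and `upIter L Y k` are `D_T^k(Y)` and `U_T^k(Y)` for `T = L`.
def downIter (k : ℕ) : Submodule R M := (fun Z : Submodule R M => Z ⊓ Z.comap L)^[k] Y

def upIter (k : ℕ) : Submodule R M := (fun Z : Submodule R M => Z ⊔ Z.map L)^[k] Y

@[simp]
lemma downIter_zero : downIter L Y 0 = Y := rfl

lemma downIter_succ (k : ℕ) :
    downIter L Y (k + 1) = downIter L Y k ⊓ (downIter L Y k).comap L :=
  Function.iterate_succ_apply' _ _ _

lemma upIter_succ (k : ℕ) : upIter L Y (k + 1) = upIter L Y k ⊔ (upIter L Y k).map L :=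
  Function.iterate_succ_apply' _ _ _

variable {L Y}

lemma mem_downIter {k : ℕ} {z : M} : z ∈ downIter L Y k ↔ ∀ i ≤ k, (L ^ i) z ∈ Y := by
  induction k generalizing z with
  | zero => simp
  | succ k ih =>
    simp only [downIter_succ, mem_inf, mem_comap, ih, ← Module.End.mul_apply, ← pow_succ]
    constructor
    · rintro ⟨h, hL⟩ (_ | i) hi
      · exact h 0 k.zero_le
      · exact hL i (by omega)
    · exact fun h => ⟨fun i hi => h i (by omega), fun i hi => h (i + 1) (by omega)⟩

lemma mem_downIter_succ {k : ℕ} {z : M} :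
    z ∈ downIter L Y (k + 1) ↔ z ∈ downIter L Y k ∧ (L ^ (k + 1)) z ∈ Y := by
  simp only [mem_downIter, Nat.le_succ_iff, or_imp, forall_and, forall_eq]

lemma downIter_antitone : Antitone (downIter L Y) :=
  antitone_nat_of_succ_le fun k => by rw [downIter_succ]; exact inf_le_left

lemma map_downIter_succ_le (k : ℕ) : (downIter L Y (k + 1)).map L ≤ downIter L Y k := by
  rw [downIter_succ, map_le_iff_le_comap]
  exact inf_le_right

lemma map_pow_downIter_le {i k : ℕ} (hik : i ≤ k) : (downIter L Y k).map (L ^ i) ≤ Y := by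
  rintro _ ⟨z, hz, rfl⟩
  exact mem_downIter.1 hz i hik

lemma upIter_strictMono (h : ∀ k, ¬(upIter L Y k).map L ≤ upIter L Y k) :
    StrictMono (upIter L Y) :=
  strictMono_nat_of_lt_succ fun k => by rw [upIter_succ]; exact left_lt_sup.2 (h k)

lemma map_le_sup_map_pow_downIter
    (hrec : ∀ k, downIter L Y k ≤ downIter L Y (k + 1) ⊔ (downIter L Y (k + 1)).map L) (j : ℕ) :
    Y.map L ≤ Y ⊔ (downIter L Y j).map (L ^ (j + 1)) := by
  induction j with
  | zero => simp
  | succ j ih =>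
    refine ih.trans (sup_le le_sup_left ?_)
    calc (downIter L Y j).map (L ^ (j + 1))
        ≤ (downIter L Y (j + 1) ⊔ (downIter L Y (j + 1)).map L).map (L ^ (j + 1)) :=
          map_mono (hrec j)
      _ = (downIter L Y (j + 1)).map (L ^ (j + 1)) ⊔ (downIter L Y (j + 1)).map (L ^ (j + 2)) := by
          rw [map_sup, ← map_comp, ← Module.End.mul_eq_comp, ← pow_succ]
      _ ≤ Y ⊔ (downIter L Y (j + 1)).map (L ^ (j + 2)) :=
          sup_le_sup_right (map_pow_downIter_le le_rfl) _

lemma upIter_le_sup_map_pow_downIter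
    (hrec : ∀ k, downIter L Y k ≤ downIter L Y (k + 1) ⊔ (downIter L Y (k + 1)).map L) (k j : ℕ) :
    upIter L Y k ≤ Y ⊔ (downIter L Y j).map (L ^ (k + j)) := by
  induction k generalizing j with
  | zero => exact le_sup_left
  | succ k ih =>
    have hU : upIter L Y k ≤ Y ⊔ (downIter L Y (j + 1)).map (L ^ (k + 1 + j)) := by
      simpa only [add_right_comm, add_assoc] using ih (j + 1)
    have hY : Y.map L ≤ Y ⊔ (downIter L Y j).map (L ^ (k + 1 + j)) := by
      refine (map_le_sup_map_pow_downIter hrec (k + j)).trans (sup_le_sup_left ?_ Y)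
      rw [add_right_comm]
      exact map_mono (downIter_antitone (Nat.le_add_left j k))
    rw [upIter_succ]
    refine sup_le (hU.trans (sup_le_sup_left (map_mono (downIter_antitone j.le_succ)) Y)) ?_
    calc (upIter L Y k).map L
        ≤ Y.map L ⊔ ((downIter L Y (j + 1)).map L).map (L ^ (k + 1 + j)) := by
          refine (map_mono hU).trans_eq ?_
          rw [map_sup, ← map_comp, ← map_comp, ← Module.End.mul_eq_comp,
            ← Module.End.mul_eq_comp, ← pow_succ', pow_succ]
      _ ≤ Y ⊔ (downIter L Y j).map (L ^ (k + 1 + j)) :=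
          sup_le hY (map_mono (map_downIter_succ_le j) |>.trans le_sup_right)

lemma upIter_le_sup_map_pow
    (hrec : ∀ k, downIter L Y k ≤ downIter L Y (k + 1) ⊔ (downIter L Y (k + 1)).map L) (m : ℕ) :
    upIter L Y m ≤ Y ⊔ Y.map (L ^ m) := by
  simpa using upIter_le_sup_map_pow_downIter hrec m 0

end Iterates

section FiniteDimensional

variable {K M P : Type*} [DivisionRing K] [AddCommGroup M] [Module K M] [AddCommGroup P]
  [Module K P]

lemma exists_finrank_le_and_le_inf_ker_sup (ψ : M →ₗ[K] P) (W : Submodule K M)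
    [FiniteDimensional K (W.map ψ)] :
    ∃ G : Submodule K M, FiniteDimensional K G ∧ finrank K G ≤ finrank K (W.map ψ) ∧
      W ≤ W ⊓ LinearMap.ker ψ ⊔ G := by
  let b := finBasis K (W.map ψ)
  choose v hvW hv using fun i => mem_map.1 (b i).2
  have hGW : span K (Set.range v) ≤ W := span_le.2 (Set.range_subset_iff.2 hvW)
  refine ⟨span K (Set.range v), FiniteDimensional.span_of_finite K (Set.finite_range v),
    (finrank_range_le_card v).trans (by simp), fun w hw => ?_⟩
  let c := b.repr ⟨ψ w, mem_map_of_mem hw⟩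
  have hg : ∑ i, c i • v i ∈ span K (Set.range v) :=
    sum_mem fun i _ => smul_mem _ _ (subset_span ⟨i, rfl⟩)
  have hψg : ψ (∑ i, c i • v i) = ψ w := by
    have h := congrArg Subtype.val (b.sum_repr ⟨ψ w, mem_map_of_mem hw⟩)
    simp only [coe_sum, coe_smul] at h
    simpa only [map_sum, map_smul, hv] using h
  have hwg : w - ∑ i, c i • v i ∈ W ⊓ LinearMap.ker ψ :=
    ⟨sub_mem hw (hGW hg), by simp [hψg]⟩
  simpa using add_mem (mem_sup_left hwg) (mem_sup_right hg)

lemma le_inf_ker_sup_map_of_finrank_map_le (L : Module.End K M) (ψ : M →ₗ[K] P)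
    {Z : Submodule K M} (hLZ : (Z ⊓ LinearMap.ker ψ).map L ≤ Z) [FiniteDimensional K (Z.map ψ)]
    (hmin : ∀ G : Submodule K M, FiniteDimensional K G →
      (Z ⊓ LinearMap.ker ψ).map L ≤ Z ⊓ LinearMap.ker ψ ⊔ G → finrank K (Z.map ψ) ≤ finrank K G) :
    Z ≤ Z ⊓ LinearMap.ker ψ ⊔ (Z ⊓ LinearMap.ker ψ).map L := by
  set Z' := Z ⊓ LinearMap.ker ψ
  set V := Z' ⊔ Z'.map L
  have hVZ : V ≤ Z := sup_le inf_le_left hLZ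
  have : FiniteDimensional K (V.map ψ) := finiteDimensional_of_le (map_mono hVZ)
  obtain ⟨G, hG, hGrank, hVG⟩ := exists_finrank_le_and_le_inf_ker_sup ψ V
  have hVG' : V ≤ Z' ⊔ G := hVG.trans (sup_le_sup_right (inf_le_inf_right _ hVZ) G)
  have hmap : V.map ψ = Z.map ψ :=
    eq_of_le_of_finrank_le (map_mono hVZ) ((hmin G hG (le_sup_right.trans hVG')).trans hGrank)
  intro z hz
  obtain ⟨v, hv, hψ⟩ : ψ z ∈ V.map ψ := hmap ▸ mem_map_of_mem hz
  have hzv : z - v ∈ Z' := ⟨sub_mem hz (hVZ hv), by simp [hψ]⟩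
  simpa using add_mem (mem_sup_left hzv : z - v ∈ V) hv

lemma le_finrank_of_lt_succ {W : ℕ → Submodule K M} {m : ℕ} (hW : ∀ k < m, W k < W (k + 1))
    [FiniteDimensional K (W m)] : m ≤ finrank K (W m) := by
  revert ‹FiniteDimensional K (W m)›
  induction m with
  | zero => exact Nat.zero_le _
  | succ m ih =>
    intro
    have : FiniteDimensional K (W m) := finiteDimensional_of_le (hW m m.lt_succ_self).le
    exact (ih fun k hk => hW k (by omega)).trans_lt
      (finrank_lt_finrank_of_lt (hW m m.lt_succ_self))

lemma le_finrank_of_strictMono_of_le_sup {U : ℕ → Submodule K M} (hU : StrictMono U)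
    {Y F : Submodule K M} [FiniteDimensional K F] (hY : Y ≤ U 0) {m : ℕ} (hm : U m ≤ Y ⊔ F) :
    m ≤ finrank K F := by
  -- Modularity: between `Y` and `Y ⊔ F`, each `U k` is determined by `U k ⊓ F`.
  have hW : ∀ k < m, U k ⊓ F < U (k + 1) ⊓ F := by
    intro k hk
    have hlt := hU k.lt_succ_self
    refine lt_of_le_of_ne (inf_le_inf_right F hlt.le) fun h => hlt.ne ?_
    refine eq_of_le_of_inf_le_of_sup_le hlt.le h.ge (sup_le ?_ le_sup_right)
    exact (hU.monotone hk).trans (hm.trans (sup_le_sup_right (hY.trans (hU.monotone k.zero_le)) F))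
  have : FiniteDimensional K (U m ⊓ F : Submodule K M) := finiteDimensional_of_le inf_le_right
  exact (le_finrank_of_lt_succ hW).trans (finrank_mono inf_le_right)

end FiniteDimensional

end Submodule

section ErrDim

variable {X : Type*} [NormedAddCommGroup X] [NormedSpace ℂ X] {Y : Submodule ℂ X} {T : X →L[ℂ] X}

lemma errDim_le_finrank {F : Submodule ℂ X} [FiniteDimensional ℂ F]
    (h : Y.map (T : X →ₗ[ℂ] X) ≤ Y ⊔ F) : errDim Y T ≤ finrank ℂ F :=
  sInf_le ⟨F, inferInstance, rfl, h⟩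

lemma le_errDim {n : ℕ∞} (h : ∀ F : Submodule ℂ X, FiniteDimensional ℂ F →
    Y.map (T : X →ₗ[ℂ] X) ≤ Y ⊔ F → n ≤ finrank ℂ F) : n ≤ errDim Y T :=
  le_sInf <| by rintro _ ⟨F, hF, rfl, hle⟩; exact h F hF hle

lemma exists_finrank_eq_errDim
    (h : ∃ F : Submodule ℂ X, FiniteDimensional ℂ F ∧ Y.map (T : X →ₗ[ℂ] X) ≤ Y ⊔ F) :
    ∃ F : Submodule ℂ X, FiniteDimensional ℂ F ∧ (finrank ℂ F : ℕ∞) = errDim Y T ∧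
      Y.map (T : X →ₗ[ℂ] X) ≤ Y ⊔ F := by
  obtain ⟨F, hF, hle⟩ := h
  exact csInf_mem (s := {n | ∃ F : Submodule ℂ X, FiniteDimensional ℂ F ∧
    (finrank ℂ F : ℕ∞) = n ∧ Y.map (T : X →ₗ[ℂ] X) ≤ Y ⊔ F}) ⟨_, F, hF, rfl, hle⟩

lemma map_not_le_of_errDim_pos (h : 0 < errDim Y T) : ¬Y.map (T : X →ₗ[ℂ] X) ≤ Y :=
  fun hle => h.not_ge <| by simpa using errDim_le_finrank (F := ⊥) (by simpa using hle)

lemma downIter_le_sup_map_downIter_succ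
    (hai : ∃ F : Submodule ℂ X, FiniteDimensional ℂ F ∧ Y.map (T : X →ₗ[ℂ] X) ≤ Y ⊔ F) {k : ℕ}
    (hk : errDim Y T ≤ errDim (downIter (T : X →ₗ[ℂ] X) Y (k + 1)) T) :
    downIter (T : X →ₗ[ℂ] X) Y k ≤ downIter (T : X →ₗ[ℂ] X) Y (k + 1) ⊔
      (downIter (T : X →ₗ[ℂ] X) Y (k + 1)).map (T : X →ₗ[ℂ] X) := by
  set L : Module.End ℂ X := (T : X →ₗ[ℂ] X)
  obtain ⟨F, hF, hFdim, hYF⟩ := exists_finrank_eq_errDim hai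
  set ψ := Y.mkQ ∘ₗ L ^ (k + 1)
  have hker : downIter L Y k ⊓ LinearMap.ker ψ = downIter L Y (k + 1) := by
    ext z
    simp [ψ, mem_downIter_succ, Quotient.mk_eq_zero]
  have hψ : (downIter L Y k).map ψ ≤ F.map Y.mkQ :=
    calc (downIter L Y k).map ψ = (((downIter L Y k).map (L ^ k)).map L).map Y.mkQ := by
          simp only [ψ, pow_succ', Module.End.mul_eq_comp, map_comp]
      _ ≤ (Y ⊔ F).map Y.mkQ := map_mono ((map_mono (map_pow_downIter_le le_rfl)).trans hYF)
      _ = F.map Y.mkQ := by rw [Submodule.map_sup, mkQ_map_self, bot_sup_eq]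
  have : FiniteDimensional ℂ ((downIter L Y k).map ψ) := finiteDimensional_of_le hψ
  have hmin : ∀ G : Submodule ℂ X, FiniteDimensional ℂ G →
      (downIter L Y (k + 1)).map L ≤ downIter L Y (k + 1) ⊔ G →
      finrank ℂ ((downIter L Y k).map ψ) ≤ finrank ℂ G := by
    intro G hG hLG
    have : (finrank ℂ ((downIter L Y k).map ψ) : ℕ∞) ≤ finrank ℂ G :=
      calc (finrank ℂ ((downIter L Y k).map ψ) : ℕ∞) ≤ finrank ℂ F := by
            exact_mod_cast (finrank_mono hψ).trans (finrank_map_le _ _)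
        _ = errDim Y T := hFdim
        _ ≤ errDim (downIter L Y (k + 1)) T := hk
        _ ≤ finrank ℂ G := errDim_le_finrank hLG
    exact_mod_cast this
  rw [← hker] at hmin ⊢
  exact le_inf_ker_sup_map_of_finrank_map_le L ψ (hker ▸ map_downIter_succ_le k) hmin

end ErrDim

theorem key_lemma_error_dims_of_powers_grow_general
    {X : Type*} [NormedAddCommGroup X] [NormedSpace ℂ X]
    (Y : Submodule ℂ X) (T : X →L[ℂ] X)
    (hai : ∃ F : Submodule ℂ X, FiniteDimensional ℂ F ∧ Y.map (T : X →ₗ[ℂ] X) ≤ Y ⊔ F)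
    (hpos : 0 < errDim Y T)
    (hD : ∀ k : ℕ, errDim Y T ≤ errDim ((fun Z : Submodule ℂ X => Z ⊓ Z.comap (T : X →ₗ[ℂ] X))^[k] Y) T)
    (hU : ∀ k : ℕ, errDim Y T ≤ errDim ((fun Z : Submodule ℂ X => Z ⊔ Z.map (T : X →ₗ[ℂ] X))^[k] Y) T) :
    ∀ m : ℕ, (m : ℕ∞) ≤ errDim Y (T ^ m) := by
  intro m
  have hrec k := downIter_le_sup_map_downIter_succ hai (hD (k + 1))
  have hstrict : StrictMono (upIter (T : X →ₗ[ℂ] X) Y) :=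
    upIter_strictMono fun k => map_not_le_of_errDim_pos (hpos.trans_le (hU k))
  refine le_errDim fun F _ hF => ?_
  rw [ContinuousLinearMap.toLinearMap_pow] at hF
  exact_mod_cast le_finrank_of_strictMono_of_le_sup hstrict le_rfl
    ((upIter_le_sup_map_pow hrec m).trans (sup_le le_sup_left hF))

theorem key_lemma_error_dims_of_powers_grow
    {X : Type*} [NormedAddCommGroup X] [NormedSpace ℂ X] [CompleteSpace X]
    (Y : Submodule ℂ X) (hY : IsHalfSpace Y) (T : X →L[ℂ] X)
    (hai : ∃ F : Submodule ℂ X, FiniteDimensional ℂ F ∧ Y.map (T : X →ₗ[ℂ] X) ≤ Y ⊔ F)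
    (hpos : 0 < errDim Y T)
    (hD : ∀ k : ℕ, errDim Y T ≤ errDim ((fun Z : Submodule ℂ X => Z ⊓ Z.comap (T : X →ₗ[ℂ] X))^[k] Y) T)
    (hU : ∀ k : ℕ, errDim Y T ≤ errDim ((fun Z : Submodule ℂ X => Z ⊔ Z.map (T : X →ₗ[ℂ] X))^[k] Y) T) :
    ∀ m : ℕ, (m : ℕ∞) ≤ errDim Y (T ^ m) :=
  key_lemma_error_dims_of_powers_grow_general Y T hai hpos hD hU
end

section
/- Let T ∈ L(X), Y a half-space almost invariant under the norm-closed algebra generated by T, and suppose d_{Y,T} > 0. Then there exists k ∈ ℕ such that either d_{D_T^k(Y),T} < d_{Y,T} or d_{U_T^k(Y),T} < d_{Y,T}. -/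
/-- The norm-closed algebra generated by `T`: the closure of the polynomials in `T`
without constant term. -/
def closedAlgGen {X : Type*} [NormedAddCommGroup X] [NormedSpace ℂ X]
    (T : X →L[ℂ] X) : Set (X →L[ℂ] X) :=
  closure {S | ∃ p : Polynomial ℂ, p.coeff 0 = 0 ∧ S = Polynomial.aeval T p}

/-! If no iterate lowers `d = d_{Y,T}`, then every `D_T^k(Y)` and `U_T^k(Y)` has error dimension
exactly `d`, since neither operation can raise it. Equality along the `U`-chain makes `T` injective
on the successive error spaces, so `y ∈ Y` and `T^m y ∈ Y` force `T^i y ∈ Y` for all `i ≤ m`: the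
kernel of `y ↦ [T^m y] : Y → X/Y` is `D_T^m(Y)`. Equality along the `D`-chain gives `D_T^m(Y)`
codimension `m d` in `Y`, so `T^m` has error rank `m d`, unbounded in `m` since `d > 0`. On the
other hand every element of the closed algebra generated by `T` has finite error rank, the sets
`{S | rank ≤ n}` are closed, and error rank is subadditive and scale invariant; by Baire category
it is then uniformly bounded on that algebra. -/

universe u

namespace AlmostInvariant

open Module Submodule LinearMap Cardinal Topology

theorem rank_range_eq_of_ker_eq {R M : Type*} {N N' : Type u} [Ring R] [AddCommGroup M] [Module R M]
    [AddCommGroup N] [Module R N] [AddCommGroup N'] [Module R N']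
    {g : M →ₗ[R] N} {g' : M →ₗ[R] N'} (h : ker g = ker g') :
    Module.rank R (range g) = Module.rank R (range g') :=
  (g.quotKerEquivRange.symm.trans ((quotEquivOfEq _ _ h).trans g'.quotKerEquivRange)).rank_eq

section Algebra

variable {K V : Type*} [DivisionRing K] [AddCommGroup V] [Module K V]

-- `d_{Z,f} = dim (errorSpace Z f)`, see `errDim_eq_toENat_rank`.
def errorSpace (Z : Submodule K V) (f : V →ₗ[K] V) : Submodule K (V ⧸ Z) :=
  (Z.map f).map Z.mkQ

def down (f : V →ₗ[K] V) (Z : Submodule K V) : Submodule K V := Z ⊓ Z.comap f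

def up (f : V →ₗ[K] V) (Z : Submodule K V) : Submodule K V := Z ⊔ Z.map f

variable (f : V →ₗ[K] V) (Z : Submodule K V)

theorem map_le_sup_iff_errorSpace_le {F : Submodule K V} :
    Z.map f ≤ Z ⊔ F ↔ errorSpace Z f ≤ F.map Z.mkQ := by
  rw [errorSpace, ← map_comp, map_le_iff_le_comap, map_le_iff_le_comap, comap_comp, comap_map_mkQ]

theorem errorSpace_eq_range : errorSpace Z f = range (Z.mkQ ∘ₗ f ∘ₗ Z.subtype) := by
  rw [errorSpace, range_comp, range_comp, range_subtype]

theorem rank_errorSpace_lt_aleph0 {F : Submodule K V} [FiniteDimensional K F]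
    (h : Z.map f ≤ Z ⊔ F) : Module.rank K (errorSpace Z f) < ℵ₀ :=
  (Submodule.rank_mono ((map_le_sup_iff_errorSpace_le f Z).1 h)).trans_lt
    ((rank_map_le _ _).trans_lt (rank_lt_aleph0 K F))

theorem errorSpace_add_le (g : V →ₗ[K] V) :
    errorSpace Z (f + g) ≤ errorSpace Z f ⊔ errorSpace Z g := by
  simp only [errorSpace_eq_range, add_comp, comp_add]
  exact range_add_le _ _

theorem rank_errorSpace_iterate_le {g : Submodule K V → Submodule K V}
    (hg : ∀ W, Module.rank K (errorSpace (g W) f) ≤ Module.rank K (errorSpace W f)) (k : ℕ) :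
    Module.rank K (errorSpace (g^[k] Z) f) ≤ Module.rank K (errorSpace Z f) := by
  induction k with
  | zero => rfl
  | succ k ih => exact (Function.iterate_succ_apply' g k Z ▸ hg _).trans ih

theorem down_le : down f Z ≤ Z := inf_le_left

theorem rank_map_mkQ_down :
    Module.rank K (Z.map (down f Z).mkQ) = Module.rank K (errorSpace Z f) := by
  have hZ : Z.map (down f Z).mkQ = range ((down f Z).mkQ ∘ₗ Z.subtype) := by
    rw [range_comp, range_subtype]
  rw [hZ, errorSpace_eq_range]
  -- `z ↦ [z] : Z → V ⧸ D_f Z` and `z ↦ [f z] : Z → V ⧸ Z` have the same kernel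
  apply rank_range_eq_of_ker_eq
  rw [ker_comp, ker_comp, ker_mkQ, ker_mkQ]
  ext z
  simp only [mem_comap, down, mem_inf, subtype_apply, coe_comp, Function.comp_apply]
  exact and_iff_right z.2

theorem rank_errorSpace_down_le :
    Module.rank K (errorSpace (down f Z) f) ≤ Module.rank K (errorSpace Z f) := by
  have hfD : (down f Z).map f ≤ Z := map_le_iff_le_comap.2 inf_le_right
  exact (Submodule.rank_mono (Submodule.map_mono hfD)).trans_eq (rank_map_mkQ_down f Z)

theorem mem_down_iterate_iff {m : ℕ} {x : V} :
    x ∈ (down f)^[m] Z ↔ ∀ i ≤ m, (f ^ i) x ∈ Z := by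
  induction m generalizing Z with
  | zero => simp
  | succ m ih =>
    rw [Function.iterate_succ_apply, ih]
    simp only [down, mem_inf, mem_comap, ← Module.End.mul_apply, ← pow_succ']
    constructor
    · rintro h (_ | i) hi
      exacts [(h 0 (Nat.zero_le _)).1, (h i (by omega)).2]
    · exact fun h i hi => ⟨h i (by omega), h (i + 1) (by omega)⟩

theorem down_iterate_le (m : ℕ) : (down f)^[m] Z ≤ Z :=
  Function.iterate_le_id_of_le_id (down_le f) m Z

theorem rank_map_mkQ_add_rank_map_mkQ {A B C : Submodule K V} (hAB : A ≤ B) (hBC : B ≤ C) :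
    Module.rank K (B.map A.mkQ) + Module.rank K (C.map B.mkQ) = Module.rank K (C.map A.mkQ) := by
  set g := (factor hAB).domRestrict (C.map A.mkQ)
  have hrange : range g = C.map B.mkQ := by
    rw [range_domRestrict, ← map_comp, factor_comp_mk]
  have hker : ker (factor hAB) = B.map A.mkQ := by
    ext y
    obtain ⟨x, rfl⟩ := A.mkQ_surjective y
    rw [mem_ker, factor_mk, mkQ_apply, Quotient.mk_eq_zero, ← mem_comap, comap_map_mkQ,
      sup_eq_right.2 hAB]
  rw [← rank_range_add_rank_ker g, hrange, add_comm, ker_domRestrict, hker,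
    (comapSubtypeEquivOfLe (map_mono hBC)).rank_eq]

theorem rank_map_mkQ_down_iterate {d : ℕ}
    (hD : ∀ k, Module.rank K (errorSpace ((down f)^[k] Z) f) = d) (m : ℕ) :
    Module.rank K (Z.map ((down f)^[m] Z).mkQ) = m * d := by
  induction m with
  | zero =>
    rw [Function.iterate_zero_apply, Submodule.mkQ_map_self]
    simp
  | succ m ih =>
    rw [Function.iterate_succ_apply', ← rank_map_mkQ_add_rank_map_mkQ
      (down_le f _) (down_iterate_le f Z m), rank_map_mkQ_down, hD, ih]
    push_cast
    ring

theorem le_comap_up : Z ≤ (up f Z).comap f :=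
  map_le_iff_le_comap.1 (le_sup_right : Z.map f ≤ up f Z)

theorem map_up_mkQ : (up f Z).map Z.mkQ = errorSpace Z f := by
  rw [up, Submodule.map_sup, mkQ_map_self, bot_sup_eq, errorSpace]

theorem errorSpace_up :
    errorSpace (up f Z) f = (errorSpace Z f).map (Z.mapQ (up f Z) f (le_comap_up f Z)) := by
  rw [← map_up_mkQ f Z, ← map_comp, mapQ_mkQ, map_comp]
  rfl

theorem rank_errorSpace_up_le :
    Module.rank K (errorSpace (up f Z) f) ≤ Module.rank K (errorSpace Z f) := by
  rw [errorSpace_up]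
  exact rank_map_le _ _

theorem mem_of_mem_up_of_apply_mem_up {d : ℕ} (hZ : Module.rank K (errorSpace Z f) = d)
    (hUZ : Module.rank K (errorSpace (up f Z) f) = d) {x : V} (hx : x ∈ up f Z)
    (hfx : f x ∈ up f Z) : x ∈ Z := by
  -- `f` induces a surjection `errorSpace Z f → errorSpace (up f Z) f`, injective as the ranks agree
  set g := (Z.mapQ (up f Z) f (le_comap_up f Z)).domRestrict (errorSpace Z f)
  have hker : ker g = ⊥ := by
    have hrank := rank_range_add_rank_ker g
    rw [range_domRestrict, ← errorSpace_up, hUZ, hZ, add_eq_left_iff] at hrank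
    refine Submodule.rank_eq_zero.1 (hrank.resolve_left fun h => ?_)
    exact natCast_lt_aleph0.not_ge (le_max_left _ _ |>.trans h)
  have hxZ : Z.mkQ x ∈ errorSpace Z f := map_up_mkQ f Z ▸ mem_map_of_mem hx
  have hgx : g ⟨_, hxZ⟩ = 0 := by
    simpa [g] using hfx
  simpa using congrArg Subtype.val ((ker_eq_bot.1 hker) (hgx.trans g.map_zero.symm))

theorem pow_apply_mem_up_iterate (k : ℕ) {y : V} (hy : y ∈ Z) : (f ^ k) y ∈ (up f)^[k] Z := by
  induction k with
  | zero => simpa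
  | succ k ih =>
    rw [Function.iterate_succ_apply', pow_succ', Module.End.mul_apply]
    exact mem_sup_right (mem_map_of_mem ih)

theorem mem_of_mem_up_iterate_of_apply_mem {d : ℕ}
    (hU : ∀ k, Module.rank K (errorSpace ((up f)^[k] Z) f) = d) {x : V} (hfx : f x ∈ Z) :
    ∀ k, x ∈ (up f)^[k] Z → x ∈ Z
  | 0, hx => hx
  | k + 1, hx => by
    have hle : Z ≤ (up f)^[k + 1] Z := Function.id_le_iterate_of_id_le (fun _ => le_sup_left) _ Z
    have hUk := hU (k + 1)
    rw [Function.iterate_succ_apply'] at hx hle hUk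
    exact mem_of_mem_up_iterate_of_apply_mem hU hfx k
      (mem_of_mem_up_of_apply_mem_up f _ (hU k) hUk hx (hle hfx))

theorem pow_apply_mem_of_pow_apply_mem {d : ℕ}
    (hU : ∀ k, Module.rank K (errorSpace ((up f)^[k] Z) f) = d) {y : V} (hy : y ∈ Z) {m : ℕ}
    (hm : (f ^ m) y ∈ Z) {i : ℕ} (hi : i ≤ m) : (f ^ i) y ∈ Z := by
  induction hi using Nat.decreasingInduction with
  | self => exact hm
  | of_succ k _ hk =>
    rw [pow_succ', Module.End.mul_apply] at hk
    exact mem_of_mem_up_iterate_of_apply_mem f Z hU hk k (pow_apply_mem_up_iterate f Z k hy)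

theorem rank_errorSpace_pow {d : ℕ}
    (hD : ∀ k, Module.rank K (errorSpace ((down f)^[k] Z) f) = d)
    (hU : ∀ k, Module.rank K (errorSpace ((up f)^[k] Z) f) = d) (m : ℕ) :
    Module.rank K (errorSpace Z (f ^ m)) = m * d := by
  have hrange : Z.map ((down f)^[m] Z).mkQ = range (((down f)^[m] Z).mkQ ∘ₗ Z.subtype) := by
    rw [range_comp, range_subtype]
  rw [← rank_map_mkQ_down_iterate f Z hD m, hrange, errorSpace_eq_range]
  apply rank_range_eq_of_ker_eq
  rw [ker_comp, ker_comp, ker_mkQ, ker_mkQ]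
  ext z
  simp only [mem_comap, coe_comp, Function.comp_apply, subtype_apply, mem_down_iterate_iff]
  exact ⟨fun h _ => pow_apply_mem_of_pow_apply_mem f Z hU z.2 h, fun h => h m le_rfl⟩

end Algebra

theorem natCast_le_rank_range_iff {K M N : Type*} [DivisionRing K] [AddCommGroup M] [Module K M]
    [AddCommGroup N] [Module K N] (g : M →ₗ[K] N) {n : ℕ} :
    n ≤ Module.rank K (range g) ↔ ∃ v : Fin n → M, LinearIndependent K (g ∘ v) := by
  have hrestrict (v : Fin n → M) :
      LinearIndependent K (g.rangeRestrict ∘ v) ↔ LinearIndependent K (g ∘ v) :=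
    ((range g).subtype.linearIndependent_iff (ker_subtype _)).symm
  rw [natCast_le_rank_iff]
  constructor
  · rintro ⟨w, hw⟩
    choose v hv using fun i => g.surjective_rangeRestrict (w i)
    have hw' : g.rangeRestrict ∘ v = w := funext hv
    exact ⟨v, (hrestrict v).1 (hw' ▸ hw)⟩
  · rintro ⟨v, hv⟩
    exact ⟨g.rangeRestrict ∘ v, (hrestrict v).2 hv⟩

theorem errorSpace_smul_le {K V : Type*} [Field K] [AddCommGroup V] [Module K V]
    (Z : Submodule K V) (f : V →ₗ[K] V) (t : K) : errorSpace Z (t • f) ≤ errorSpace Z f := by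
  rintro _ ⟨_, ⟨y, hy, rfl⟩, rfl⟩
  exact ⟨f (t • y), ⟨t • y, Z.smul_mem t hy, rfl⟩, by simp⟩

theorem exists_forall_le_of_isClosed_sublevel {𝕜 E : Type*} [NontriviallyNormedField 𝕜]
    [AddCommGroup E] [Module 𝕜 E] [TopologicalSpace E] [ContinuousAdd E] [ContinuousSMul 𝕜 E]
    [BaireSpace E] (r : E → ℕ∞) (hfin : ∀ x, r x ≠ ⊤)
    (hclosed : ∀ n : ℕ, IsClosed {x | r x ≤ n}) (hadd : ∀ x y, r (x + y) ≤ r x + r y)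
    (hsmul : ∀ (t : 𝕜) x, r (t • x) ≤ r x) : ∃ N : ℕ, ∀ x, r x ≤ N := by
  have hcover : ⋃ n : ℕ, {x | r x ≤ n} = Set.univ :=
    Set.eq_univ_of_forall fun x => Set.mem_iUnion.2 ⟨(r x).toNat, (ENat.natCast_toNat (hfin x)).ge⟩
  obtain ⟨N, x₀, hx₀⟩ := nonempty_interior_of_iUnion_of_closed hclosed hcover
  refine ⟨N + N, fun x => ?_⟩
  have hcont : Continuous fun t : 𝕜 => x₀ + t • x := by fun_prop
  have hnear : ∀ᶠ t in 𝓝[≠] (0 : 𝕜), x₀ + t • x ∈ interior {x | r x ≤ N} :=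
    nhdsWithin_le_nhds (hcont.continuousAt.preimage_mem_nhds (by
      simpa using isOpen_interior.mem_nhds hx₀))
  obtain ⟨t, ht, ht0⟩ := (hnear.and self_mem_nhdsWithin).exists
  have hx : x = t⁻¹ • ((x₀ + t • x) + (-1 : 𝕜) • x₀) := by
    rw [smul_add, smul_add, smul_smul, inv_mul_cancel₀ ht0, one_smul, smul_smul]
    simp
  have hle : ∀ y ∈ interior {x | r x ≤ N}, r y ≤ N := fun y hy =>
    (interior_subset hy : y ∈ {x | r x ≤ N})
  calc r x = r (t⁻¹ • ((x₀ + t • x) + (-1 : 𝕜) • x₀)) := congrArg r hx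
    _ ≤ r (x₀ + t • x) + r ((-1 : 𝕜) • x₀) := (hsmul _ _).trans (hadd _ _)
    _ ≤ N + N := add_le_add (hle _ ht) ((hsmul _ _).trans (hle _ hx₀))

theorem exists_bound_rank_errorSpace {𝕜 X : Type*} [NontriviallyNormedField 𝕜] [CompleteSpace 𝕜]
    [NormedAddCommGroup X] [NormedSpace 𝕜 X] [CompleteSpace X] {Y : Submodule 𝕜 X}
    (hY : IsClosed (Y : Set X)) {A : Submodule 𝕜 (X →L[𝕜] X)}
    (hA : IsClosed (A : Set (X →L[𝕜] X)))
    (hfin : ∀ S ∈ A, Module.rank 𝕜 (errorSpace Y (S : X →ₗ[𝕜] X)) < ℵ₀) :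
    ∃ N : ℕ, ∀ S ∈ A, Module.rank 𝕜 (errorSpace Y (S : X →ₗ[𝕜] X)) ≤ N := by
  -- makes `X ⧸ Y` a Hausdorff normed space, where linear independence is an open condition
  have : IsClosed (Y : Set X) := hY
  have : CompleteSpace A := hA.completeSpace_coe
  let r : A → ℕ∞ := fun S => toENat (Module.rank 𝕜 (errorSpace Y ((S : X →L[𝕜] X) : X →ₗ[𝕜] X)))
  have hclosed (n : ℕ) : IsClosed {S | r S ≤ n} := by
    have hcompl : {S | r S ≤ n}ᶜ = ⋃ v : Fin (n + 1) → Y,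
        {S : A | LinearIndependent 𝕜 fun i => Y.mkQ ((S : X →L[𝕜] X) (v i))} := by
      ext S
      simp only [r, Set.mem_compl_iff, Set.mem_ofPred_eq, toENat_le_natCast, not_le,
        ← natCast_add_one_le_iff, ← Nat.cast_add_one, Set.mem_iUnion]
      rw [errorSpace_eq_range, natCast_le_rank_range_iff]
      rfl
    rw [← isOpen_compl_iff, hcompl]
    exact isOpen_iUnion fun v => isOpen_setOfPred_linearIndependent.preimage (by fun_prop)
  have hadd (S S' : A) : r (S + S') ≤ r S + r S' := by
    simp only [r, ← map_add]
    exact toENat.monotone' ((Submodule.rank_mono (errorSpace_add_le _ _ _)).trans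
      (rank_add_le_rank_add_rank _ _))
  have hsmul (t : 𝕜) (S : A) : r (t • S) ≤ r S :=
    toENat.monotone' (Submodule.rank_mono (errorSpace_smul_le _ _ t))
  obtain ⟨N, hN⟩ := exists_forall_le_of_isClosed_sublevel r
    (fun S => toENat_ne_top.2 (hfin S S.2)) hclosed hadd hsmul
  exact ⟨N, fun S hS => toENat_le_natCast.1 (hN ⟨S, hS⟩)⟩

theorem errDim_eq_toENat_rank {X : Type*} [NormedAddCommGroup X] [NormedSpace ℂ X]
    (Y : Submodule ℂ X) (T : X →L[ℂ] X) :
    errDim Y T = toENat (Module.rank ℂ (errorSpace Y (T : X →ₗ[ℂ] X))) := by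
  set W := errorSpace Y (T : X →ₗ[ℂ] X)
  apply le_antisymm
  · by_cases hW : Module.rank ℂ W < ℵ₀
    · have : FiniteDimensional ℂ W := Module.rank_lt_aleph0_iff.1 hW
      -- a linear section of `Y.mkQ` lifts `W` to a complement of no larger dimension
      obtain ⟨g, hg⟩ := Y.mkQ.exists_rightInverse_of_surjective (Y.range_mkQ)
      have hlift : Y.map (T : X →ₗ[ℂ] X) ≤ Y ⊔ W.map g := by
        rw [map_le_sup_iff_errorSpace_le, ← Submodule.map_comp, hg, Submodule.map_id]
      calc errDim Y T ≤ finrank ℂ (W.map g) := sInf_le ⟨W.map g, inferInstance, rfl, hlift⟩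
        _ = toENat (Module.rank ℂ (W.map g)) := by
          rw [← finrank_eq_rank, toENat_nat]
        _ ≤ toENat (Module.rank ℂ W) := toENat.monotone' (rank_map_le g W)
    · rw [toENat_eq_top.2 (not_lt.1 hW)]
      exact le_top
  · refine le_sInf ?_
    rintro _ ⟨F, hF, rfl, hle⟩
    calc toENat (Module.rank ℂ W) ≤ toENat (Module.rank ℂ (F.map Y.mkQ)) :=
          toENat.monotone' (Submodule.rank_mono ((map_le_sup_iff_errorSpace_le _ _).1 hle))
      _ ≤ toENat (Module.rank ℂ F) := toENat.monotone' (rank_map_le _ _)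
      _ = finrank ℂ F := by rw [← finrank_eq_rank, toENat_nat]

theorem rank_errorSpace_eq_of_errDim_le {X : Type*} [NormedAddCommGroup X] [NormedSpace ℂ X]
    {T : X →L[ℂ] X} {Y W : Submodule ℂ X} {d : ℕ}
    (hY : Module.rank ℂ (errorSpace Y (T : X →ₗ[ℂ] X)) = d)
    (hWY : Module.rank ℂ (errorSpace W (T : X →ₗ[ℂ] X)) ≤ Module.rank ℂ (errorSpace Y T))
    (hdim : errDim Y T ≤ errDim W T) :
    Module.rank ℂ (errorSpace W (T : X →ₗ[ℂ] X)) = d := by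
  rw [errDim_eq_toENat_rank, errDim_eq_toENat_rank, hY, toENat_nat, natCast_le_toENat] at hdim
  exact le_antisymm (hWY.trans_eq hY) hdim

theorem closedAlgGen_eq_topologicalClosure {X : Type*} [NormedAddCommGroup X] [NormedSpace ℂ X]
    (T : X →L[ℂ] X) : closedAlgGen T = ((LinearMap.ker (Polynomial.lcoeff ℂ 0)).map
      (Polynomial.aeval T).toLinearMap).topologicalClosure := by
  rw [closedAlgGen, Submodule.topologicalClosure_coe]
  congr 1
  ext S
  simp [eq_comm]

theorem pow_mem_closedAlgGen {X : Type*} [NormedAddCommGroup X] [NormedSpace ℂ X]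
    (T : X →L[ℂ] X) {m : ℕ} (hm : m ≠ 0) : T ^ m ∈ closedAlgGen T :=
  subset_closure ⟨Polynomial.X ^ m, by simp [Polynomial.coeff_X_pow, hm.symm], by simp⟩

theorem exists_forall_rank_errorSpace_le {X : Type*} [NormedAddCommGroup X] [NormedSpace ℂ X]
    [CompleteSpace X] {T : X →L[ℂ] X} {Y : Submodule ℂ X} (hY : IsClosed (Y : Set X))
    (hai : ∀ S ∈ closedAlgGen T, ∃ F : Submodule ℂ X,
      FiniteDimensional ℂ F ∧ Y.map (S : X →ₗ[ℂ] X) ≤ Y ⊔ F) :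
    ∃ N : ℕ, ∀ S ∈ closedAlgGen T, Module.rank ℂ (errorSpace Y (S : X →ₗ[ℂ] X)) ≤ N := by
  rw [closedAlgGen_eq_topologicalClosure] at hai ⊢
  refine exists_bound_rank_errorSpace hY (Submodule.isClosed_topologicalClosure _) fun S hS => ?_
  obtain ⟨F, hF, hle⟩ := hai S hS
  exact rank_errorSpace_lt_aleph0 _ _ hle

end AlmostInvariant

open AlmostInvariant Cardinal

theorem exists_iterate_decreasing_error_dim
    {X : Type*} [NormedAddCommGroup X] [NormedSpace ℂ X] [CompleteSpace X]
    (T : X →L[ℂ] X) (Y : Submodule ℂ X) (hY : IsHalfSpace Y)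
    (hai : ∀ S ∈ closedAlgGen T, ∃ F : Submodule ℂ X,
      FiniteDimensional ℂ F ∧ Y.map (S : X →ₗ[ℂ] X) ≤ Y ⊔ F)
    (hpos : 0 < errDim Y T) :
    ∃ k : ℕ,
      errDim ((fun Z : Submodule ℂ X => Z ⊓ Z.comap (T : X →ₗ[ℂ] X))^[k] Y) T < errDim Y T ∨
      errDim ((fun Z : Submodule ℂ X => Z ⊔ Z.map (T : X →ₗ[ℂ] X))^[k] Y) T < errDim Y T := by
  obtain ⟨N, hN⟩ := exists_forall_rank_errorSpace_le hY.1 hai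
  obtain ⟨d, hd⟩ := lt_aleph0.1
    ((hN T (by simpa using pow_mem_closedAlgGen T one_ne_zero)).trans_lt natCast_lt_aleph0)
  have hd0 : d ≠ 0 := by
    rintro rfl
    simp [errDim_eq_toENat_rank, hd] at hpos
  by_contra! hcon
  have hD (k : ℕ) : Module.rank ℂ (errorSpace ((down (T : X →ₗ[ℂ] X))^[k] Y) T) = d :=
    rank_errorSpace_eq_of_errDim_le hd
      (rank_errorSpace_iterate_le _ Y (rank_errorSpace_down_le _) k) (hcon k).1
  have hU (k : ℕ) : Module.rank ℂ (errorSpace ((up (T : X →ₗ[ℂ] X))^[k] Y) T) = d :=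
    rank_errorSpace_eq_of_errDim_le hd
      (rank_errorSpace_iterate_le _ Y (rank_errorSpace_up_le _) k) (hcon k).2
  have hpow := hN _ (pow_mem_closedAlgGen T N.succ_ne_zero)
  rw [ContinuousLinearMap.toLinearMap_pow, rank_errorSpace_pow _ _ hD hU] at hpow
  norm_cast at hpow
  nlinarith [Nat.one_le_iff_ne_zero.2 hd0]
end
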